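/- arXiv:1703.03500 — 12 statements merged into one kernel-verified Lean document; each statement's English description precedes it below -/
import Mathlib

section
/- Every minimal k-polar obstruction has at most k+2 connected components. -/
/-!
Suppose `G` has at least `k + 3` components and delete any vertex `v`. In a `k`-polar partition
of `G - v` each clique lies in one component, so at least two components of `G` other than that
of `v` lie entirely in the multipartite side `A`. Non-adjacent vertices of `A` lie in the same
part, so `A` is a single independent part, and any vertex `x` of such a component is isolated.
Deleting `x` instead, `x` can be added to the single part of `A`, so `G` itself is `k`-polar.
-/

/-- A graph is `(s,k)`-polar if its vertices can be partitioned into `A` (fibers of `f` below `s`)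
inducing a complete multipartite graph with at most `s` parts, and `B` (fibers in `[s, s+k)`)
inducing a disjoint union of at most `k` cliques, with no edges between distinct parts of `B`
and all edges between distinct parts of `A`. -/
def IsSKPolar {V : Type*} (G : SimpleGraph V) (s k : ℕ) : Prop :=
  ∃ f : V → ℕ, (∀ v, f v < s + k) ∧
    (∀ u v, u ≠ v → f u < s → f v < s → (G.Adj u v ↔ f u ≠ f v)) ∧
    (∀ u v, u ≠ v → s ≤ f u → s ≤ f v → (G.Adj u v ↔ f u = f v))

/-- A minimal `(s,k)`-polar obstruction: not `(s,k)`-polar, but every proper induced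
subgraph is `(s,k)`-polar. -/
def IsMinimalPolarObstruction {V : Type*} (G : SimpleGraph V) (s k : ℕ) : Prop :=
  ¬ IsSKPolar G s k ∧ ∀ S : Set V, S ≠ Set.univ → IsSKPolar (G.induce S) s k

theorem Set.ncard_image_le_ncard_image_of_factorsThrough {α β γ : Type*} {s : Set α}
    {f : α → β} {g : α → γ} (hfg : ∀ a ∈ s, ∀ b ∈ s, f a = f b → g a = g b)
    (hs : (f '' s).Finite) : (g '' s).ncard ≤ (f '' s).ncard := by
  rcases s.eq_empty_or_nonempty with rfl | ⟨a₀, -⟩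
  · simp
  have : Nonempty α := ⟨a₀⟩
  -- `c ↦ f (a preimage of c under g)` is injective on `g '' s`
  refine Set.ncard_le_ncard_of_injOn (fun c => f (Function.invFunOn g s c)) ?_ ?_ hs
  · rintro _ ⟨a, ha, rfl⟩
    exact Set.mem_image_of_mem f (Function.invFunOn_mem ⟨a, ha, rfl⟩)
  · rintro _ ⟨a, ha, rfl⟩ _ ⟨b, hb, rfl⟩ hab
    rw [← Function.invFunOn_eq (f := g) ⟨a, ha, rfl⟩,
      ← Function.invFunOn_eq (f := g) ⟨b, hb, rfl⟩]
    exact hfg _ (Function.invFunOn_mem ⟨a, ha, rfl⟩) _ (Function.invFunOn_mem ⟨b, hb, rfl⟩)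
      hab

section PolarColoring

open SimpleGraph

variable {V : Type*} {G : SimpleGraph V} {s k : ℕ} {S : Set V} {f : V → ℕ}

/-- The witness of `IsSKPolar (G.induce S) s k`, written as a colouring of all of `V`. -/
structure IsPolarColoringOn (G : SimpleGraph V) (s k : ℕ) (S : Set V) (f : V → ℕ) : Prop where
  lt_add : ∀ u ∈ S, f u < s + k
  adj_iff_ne :
    ∀ u ∈ S, ∀ w ∈ S, u ≠ w → f u < s → f w < s → (G.Adj u w ↔ f u ≠ f w)
  adj_iff_eq :
    ∀ u ∈ S, ∀ w ∈ S, u ≠ w → s ≤ f u → s ≤ f w → (G.Adj u w ↔ f u = f w)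

theorem IsPolarColoringOn.isSKPolar (hf : IsPolarColoringOn G s k Set.univ f) :
    IsSKPolar G s k :=
  ⟨f, fun u => hf.lt_add u trivial, fun u w => hf.adj_iff_ne u trivial w trivial,
    fun u w => hf.adj_iff_eq u trivial w trivial⟩

theorem IsSKPolar.exists_isPolarColoringOn (h : IsSKPolar (G.induce S) s k) :
    ∃ f, IsPolarColoringOn G s k S f := by
  obtain ⟨f, hlt, hne, heq⟩ := h
  have hext (u : V) (hu : u ∈ S) : Function.extend Subtype.val f (fun _ => 0) u = f ⟨u, hu⟩ :=
    Subtype.val_injective.extend_apply f _ ⟨u, hu⟩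
  refine ⟨Function.extend Subtype.val f (fun _ => 0),
    ⟨fun u hu => ?_, fun u hu w hw huw => ?_, fun u hu w hw huw => ?_⟩⟩
  · rw [hext u hu]
    exact hlt _
  · rw [hext u hu, hext w hw]
    exact hne ⟨u, hu⟩ ⟨w, hw⟩ (Subtype.coe_ne_coe.1 huw)
  · rw [hext u hu, hext w hw]
    exact heq ⟨u, hu⟩ ⟨w, hw⟩ (Subtype.coe_ne_coe.1 huw)

theorem IsMinimalPolarObstruction.exists_isPolarColoringOn_compl_singleton
    (hG : IsMinimalPolarObstruction G s k) (v : V) : ∃ f, IsPolarColoringOn G s k {v}ᶜ f :=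
  (hG.2 _ (Set.compl_ne_univ.2 (Set.singleton_nonempty v))).exists_isPolarColoringOn

theorem IsPolarColoringOn.ncard_image_cliques_le (hf : IsPolarColoringOn G s k S f) :
    (G.connectedComponentMk '' {u | u ∈ S ∧ s ≤ f u}).ncard ≤ k := by
  have hcolors : f '' {u | u ∈ S ∧ s ≤ f u} ⊆ Set.Ico s (s + k) := by
    rintro _ ⟨u, ⟨hu, hsu⟩, rfl⟩
    exact ⟨hsu, hf.lt_add u hu⟩
  have hsame_color : ∀ u ∈ {u | u ∈ S ∧ s ≤ f u}, ∀ w ∈ {u | u ∈ S ∧ s ≤ f u},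
      f u = f w → G.connectedComponentMk u = G.connectedComponentMk w := by
    rintro u ⟨hu, hsu⟩ w ⟨hw, hsw⟩ huw
    rcases eq_or_ne u w with rfl | hne
    · rfl
    · exact ConnectedComponent.sound ((hf.adj_iff_eq u hu w hw hne hsu hsw).2 huw).reachable
  calc _ ≤ (f '' {u | u ∈ S ∧ s ≤ f u}).ncard :=
        Set.ncard_image_le_ncard_image_of_factorsThrough hsame_color
          ((Set.finite_Ico _ _).subset hcolors)
    _ ≤ (Set.Ico s (s + k)).ncard := Set.ncard_le_ncard hcolors (Set.finite_Ico _ _)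
    _ = k := by simp

theorem IsPolarColoringOn.card_connectedComponent_le [Finite V]
    (hf : IsPolarColoringOn G s k S f) :
    Nat.card G.ConnectedComponent ≤ (G.connectedComponentMk '' Sᶜ).ncard + k +
      {C : G.ConnectedComponent | C.supp ⊆ {u | u ∈ S ∧ f u < s}}.ncard := by
  have hcover : (Set.univ : Set G.ConnectedComponent) ⊆
      G.connectedComponentMk '' Sᶜ ∪ G.connectedComponentMk '' {u | u ∈ S ∧ s ≤ f u} ∪
        {C | C.supp ⊆ {u | u ∈ S ∧ f u < s}} := by
    intro C _
    by_cases hC : C.supp ⊆ {u | u ∈ S ∧ f u < s}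
    · exact Or.inr hC
    obtain ⟨u, rfl, hu⟩ := Set.not_subset.1 hC
    by_cases huS : u ∈ S
    · exact Or.inl (Or.inr ⟨u, ⟨huS, not_lt.1 fun h => hu ⟨huS, h⟩⟩, rfl⟩)
    · exact Or.inl (Or.inl ⟨u, huS, rfl⟩)
  calc Nat.card G.ConnectedComponent = (Set.univ : Set G.ConnectedComponent).ncard :=
        (Set.ncard_univ _).symm
    _ ≤ _ := Set.ncard_le_ncard hcover
    _ ≤ _ := (Set.ncard_union_le _ _).trans (add_le_add_left (Set.ncard_union_le _ _) _)
    _ ≤ _ := by gcongr; exact hf.ncard_image_cliques_le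

theorem IsPolarColoringOn.exists_not_reachable [Finite V] (hf : IsPolarColoringOn G s k S f)
    (hcard : (G.connectedComponentMk '' Sᶜ).ncard + k + 1 < Nat.card G.ConnectedComponent) :
    ∃ a b, ¬G.Reachable a b ∧ (∀ u, G.Reachable a u → u ∈ S ∧ f u < s) ∧
      ∀ u, G.Reachable b u → u ∈ S ∧ f u < s := by
  have htwo : 1 < {C : G.ConnectedComponent | C.supp ⊆ {u | u ∈ S ∧ f u < s}}.ncard := by
    have := hf.card_connectedComponent_le
    omega
  obtain ⟨C, D, hC, hD, hCD⟩ := (Set.one_lt_ncard_iff (Set.toFinite _)).1 htwo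
  obtain ⟨a, rfl⟩ := C.exists_rep
  obtain ⟨b, rfl⟩ := D.exists_rep
  exact ⟨a, b, fun h => hCD (ConnectedComponent.sound h),
    fun u hu => hC (ConnectedComponent.sound hu).symm,
    fun u hu => hD (ConnectedComponent.sound hu).symm⟩

theorem IsPolarColoringOn.eq_of_not_reachable (hf : IsPolarColoringOn G s k S f) {u w : V}
    (hu : u ∈ S) (hw : w ∈ S) (hfu : f u < s) (hfw : f w < s) (huw : ¬G.Reachable u w) :
    f u = f w := by
  by_contra h
  have hne : u ≠ w := by rintro rfl; exact huw .rfl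
  exact huw ((hf.adj_iff_ne u hu w hw hne hfu hfw).2 h).reachable

theorem IsPolarColoringOn.forall_eq_of_not_reachable (hf : IsPolarColoringOn G s k S f)
    {a b : V} (ha : a ∈ S) (hb : b ∈ S) (hfa : f a < s) (hfb : f b < s)
    (hab : ¬G.Reachable a b) : ∀ u ∈ S, f u < s → f u = f a := by
  intro u hu hfu
  by_cases hua : G.Reachable u a
  · have hub : ¬G.Reachable u b := fun hub => hab (hua.symm.trans hub)
    calc f u = f b := hf.eq_of_not_reachable hu hb hfu hfb hub
      _ = f a := (hf.eq_of_not_reachable ha hb hfa hfb hab).symm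
  · exact hf.eq_of_not_reachable hu ha hfu hfa hua

theorem IsPolarColoringOn.exists_component_and_forall_eq [Finite V]
    (hf : IsPolarColoringOn G s k S f)
    (hcard : (G.connectedComponentMk '' Sᶜ).ncard + k + 1 < Nat.card G.ConnectedComponent) :
    ∃ a, (∀ u, G.Reachable a u → u ∈ S ∧ f u < s) ∧
      ∀ u ∈ S, f u < s → f u = f a := by
  obtain ⟨a, b, hab, haA, hbA⟩ := hf.exists_not_reachable hcard
  obtain ⟨ha, hfa⟩ := haA a .rfl
  obtain ⟨hb, hfb⟩ := hbA b .rfl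
  exact ⟨a, haA, hf.forall_eq_of_not_reachable ha hb hfa hfb hab⟩

theorem IsPolarColoringOn.exists_isolated [Finite V] (hf : IsPolarColoringOn G s k S f)
    (hcard : (G.connectedComponentMk '' Sᶜ).ncard + k + 1 < Nat.card G.ConnectedComponent) :
    ∃ x, ∀ w, ¬G.Adj x w := by
  obtain ⟨a, haA, hsingle⟩ := hf.exists_component_and_forall_eq hcard
  refine ⟨a, fun w haw => ?_⟩
  obtain ⟨ha, hfa⟩ := haA a .rfl
  obtain ⟨hw, hfw⟩ := haA w haw.reachable
  exact (hf.adj_iff_ne a ha w hw haw.ne hfa hfw).1 haw (hsingle w hw hfw).symm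

theorem IsPolarColoringOn.update_of_isolated [DecidableEq V]
    (hf : IsPolarColoringOn G s k S f) {x : V} (hx : ∀ w, ¬G.Adj x w) {c : ℕ} (hc : c < s)
    (hsingle : ∀ u ∈ S, f u < s → f u = c) :
    IsPolarColoringOn G s k (insert x S) (Function.update f x c) := by
  have hsingle' :
      ∀ u ∈ insert x S, Function.update f x c u < s → Function.update f x c u = c := by
    intro u hu hfu
    rcases eq_or_ne u x with rfl | hux
    · exact Function.update_self ..
    rw [Function.update_of_ne hux] at hfu ⊢
    exact hsingle u (hu.resolve_left hux) hfu
  have hne_x : ∀ u, s ≤ Function.update f x c u → u ≠ x := by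
    rintro u hu rfl
    rw [Function.update_self] at hu
    omega
  refine ⟨fun u hu => ?_, fun u hu w hw huw hfu hfw => ?_, fun u hu w hw huw hfu hfw => ?_⟩
  · rcases eq_or_ne u x with rfl | hux
    · rw [Function.update_self]
      omega
    · rw [Function.update_of_ne hux]
      exact hf.lt_add u (hu.resolve_left hux)
  · by_cases hxuw : u = x ∨ w = x
    · have hnadj : ¬G.Adj u w := by
        rcases hxuw with rfl | rfl
        exacts [hx w, fun h => hx u h.symm]
      simp only [hnadj, false_iff, not_not, hsingle' u hu hfu, hsingle' w hw hfw]
    · push Not at hxuw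
      simp only [Function.update_of_ne hxuw.1, Function.update_of_ne hxuw.2] at hfu hfw ⊢
      exact hf.adj_iff_ne u (hu.resolve_left hxuw.1) w (hw.resolve_left hxuw.2) huw hfu hfw
  · have hux := hne_x u hfu
    have hwx := hne_x w hfw
    simp only [Function.update_of_ne hux, Function.update_of_ne hwx] at hfu hfw ⊢
    exact hf.adj_iff_eq u (hu.resolve_left hux) w (hw.resolve_left hwx) huw hfu hfw

end PolarColoring

theorem minimal_kPolar_obstruction_components_le_general {k : ℕ}
    {V : Type*} [Fintype V] (G : SimpleGraph V)
    (hG : IsMinimalPolarObstruction G k k) :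
    Nat.card G.ConnectedComponent ≤ k + 2 := by
  classical
  by_contra! hcard
  have hcard' (v : V) :
      (G.connectedComponentMk '' ({v}ᶜ)ᶜ).ncard + k + 1 < Nat.card G.ConnectedComponent := by
    rw [compl_compl, Set.image_singleton, Set.ncard_singleton]
    omega
  obtain ⟨C⟩ := (Nat.card_pos_iff.1 (by omega : 0 < Nat.card G.ConnectedComponent)).1
  obtain ⟨v, -⟩ := C.exists_rep
  obtain ⟨f, hf⟩ := hG.exists_isPolarColoringOn_compl_singleton v
  obtain ⟨x, hx⟩ := hf.exists_isolated (hcard' v)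
  obtain ⟨g, hg⟩ := hG.exists_isPolarColoringOn_compl_singleton x
  obtain ⟨a, haA, hsingle⟩ := hg.exists_component_and_forall_eq (hcard' x)
  have hpolar := hg.update_of_isolated hx (haA a .rfl).2 hsingle
  rw [Set.insert_eq, Set.union_compl_self] at hpolar
  exact hG.1 hpolar.isSKPolar

/-- Every minimal `k`-polar obstruction has at most `k + 2` connected components. -/
theorem minimal_kPolar_obstruction_components_le {k : ℕ} (hk : 0 < k)
    {V : Type*} [Fintype V] (G : SimpleGraph V)
    (hG : IsMinimalPolarObstruction G k k) :
    Nat.card G.ConnectedComponent ≤ k + 2 :=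
  minimal_kPolar_obstruction_components_le_general G hG
end

section
/- Every minimal k-polar obstruction has at most k+1 trivial connected components, i.e., at most k+1 isolated vertices. -/
open Set

namespace SimpleGraph

variable {V : Type*} {G : SimpleGraph V}

section ConnectedComponent

theorem IsIsolated.eq_of_reachable {u v : V} (hu : G.IsIsolated u) (h : G.Reachable u v) :
    u = v := by
  rcases ((reachable_iff_reflTransGen u v).1 h).cases_head with huv | ⟨w, huw, -⟩
  · exact huv
  · exact absurd huw (hu w)

theorem ConnectedComponent.isIsolated_out_of_supp_subsingleton {c : G.ConnectedComponent}
    (hc : c.supp.Subsingleton) : G.IsIsolated c.out := fun w hadj =>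
  have hout : c.out ∈ c.supp := c.out_eq
  have hw : w ∈ c.supp := (ConnectedComponent.sound hadj.symm.reachable).trans c.out_eq
  G.loopless.irrefl _ (hc hw hout ▸ hadj)

theorem supp_connectedComponentMk_subsingleton_of_isIsolated {v : V} (hv : G.IsIsolated v) :
    (G.connectedComponentMk v).supp.Subsingleton := fun _ hx _ hy =>
  (hv.eq_of_reachable (ConnectedComponent.exact hx).symm).symm.trans
    (hv.eq_of_reachable (ConnectedComponent.exact hy).symm)

noncomputable def trivialComponentsEquivIsolated :
    {c : G.ConnectedComponent // c.supp.Subsingleton} ≃ {v : V // G.IsIsolated v} where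
  toFun c := ⟨c.1.out, ConnectedComponent.isIsolated_out_of_supp_subsingleton c.2⟩
  invFun v := ⟨G.connectedComponentMk v.1, supp_connectedComponentMk_subsingleton_of_isIsolated v.2⟩
  left_inv c := Subtype.ext c.1.out_eq
  right_inv v := Subtype.ext (v.2.eq_of_reachable (ConnectedComponent.exact
    (G.connectedComponentMk v.1).out_eq).symm).symm

end ConnectedComponent

/-- A labelling `f` witnessing `(s,k)`-polarity of the subgraph induced on `S`: labels below `s`
are the parts of the complete multipartite side, labels in `[s, s + k)` the cliques. -/
structure IsPolarLabellingOn (G : SimpleGraph V) (s k : ℕ) (S : Set V) (f : V → ℕ) : Prop where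
  lt_add : ∀ v ∈ S, f v < s + k
  adj_iff_ne : ∀ u ∈ S, ∀ v ∈ S, u ≠ v → f u < s → f v < s → (G.Adj u v ↔ f u ≠ f v)
  adj_iff_eq : ∀ u ∈ S, ∀ v ∈ S, u ≠ v → s ≤ f u → s ≤ f v → (G.Adj u v ↔ f u = f v)

variable {s k : ℕ}

theorem isSKPolar_of_isPolarLabellingOn_univ {f : V → ℕ} (hf : G.IsPolarLabellingOn s k univ f) :
    IsSKPolar G s k :=
  ⟨f, fun v => hf.lt_add v trivial, fun u v => hf.adj_iff_ne u trivial v trivial,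
    fun u v => hf.adj_iff_eq u trivial v trivial⟩

theorem exists_isPolarLabellingOn_of_isSKPolar_induce {S : Set V}
    (h : IsSKPolar (G.induce S) s k) : ∃ f : V → ℕ, G.IsPolarLabellingOn s k S f := by
  classical
  obtain ⟨g, hlt, hne, heq⟩ := h
  refine ⟨fun x => if hx : x ∈ S then g ⟨x, hx⟩ else 0, ⟨fun v hv => ?_, fun u hu v hv huv => ?_,
    fun u hu v hv huv => ?_⟩⟩
  · simpa only [dif_pos hv] using hlt ⟨v, hv⟩
  · simp only [dif_pos hu, dif_pos hv]
    exact hne ⟨u, hu⟩ ⟨v, hv⟩ (by simpa using huv)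
  · simp only [dif_pos hu, dif_pos hv]
    exact heq ⟨u, hu⟩ ⟨v, hv⟩ (by simpa using huv)

namespace IsPolarLabellingOn

variable {S : Set V} {f : V → ℕ}

theorem congr {g : V → ℕ} (hf : G.IsPolarLabellingOn s k S f) (hfg : EqOn f g S) :
    G.IsPolarLabellingOn s k S g where
  lt_add v hv := hfg hv ▸ hf.lt_add v hv
  adj_iff_ne u hu v hv := hfg hu ▸ hfg hv ▸ hf.adj_iff_ne u hu v hv
  adj_iff_eq u hu v hv := hfg hu ▸ hfg hv ▸ hf.adj_iff_eq u hu v hv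

theorem eq_of_isIsolated {u w : V} (hf : G.IsPolarLabellingOn s k S f) (hu : u ∈ S) (hw : w ∈ S)
    (hiso : G.IsIsolated u) (hfu : f u < s) (hfw : f w < s) : f w = f u := by
  by_contra hne
  have huw : u ≠ w := by rintro rfl; exact hne rfl
  exact hiso w ((hf.adj_iff_ne u hu w hw huw hfu hfw).2 (Ne.symm hne))

theorem injOn_of_isIsolated {T : Set V} (hf : G.IsPolarLabellingOn s k S f) (hTS : T ⊆ S)
    (hiso : ∀ u ∈ T, G.IsIsolated u) (hB : ∀ u ∈ T, s ≤ f u) : InjOn f T := by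
  intro u hu w hw hfuw
  by_contra huw
  exact hiso u hu w ((hf.adj_iff_eq u (hTS hu) w (hTS hw) huw (hB u hu) (hB w hw)).2 hfuw)

theorem ncard_le_of_isIsolated {T : Set V} (hf : G.IsPolarLabellingOn s k S f) (hTS : T ⊆ S)
    (hiso : ∀ u ∈ T, G.IsIsolated u) (hB : ∀ u ∈ T, s ≤ f u) : T.ncard ≤ k := by
  calc T.ncard ≤ (Ico s (s + k)).ncard :=
        ncard_le_ncard_of_injOn f (fun u hu => ⟨hB u hu, hf.lt_add u (hTS hu)⟩)
          (hf.injOn_of_isIsolated hTS hiso hB)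
    _ = k := by simp

theorem insert_of_isIsolated {v : V} (hf : G.IsPolarLabellingOn s k S f) (hv : G.IsIsolated v)
    (hfv : f v < s) (hA : ∀ w ∈ S, f w < s → f w = f v) :
    G.IsPolarLabellingOn s k (insert v S) f := by
  refine ⟨?_, ?_, ?_⟩
  · rintro u (rfl | hu)
    exacts [by omega, hf.lt_add u hu]
  · rintro u (rfl | hu) w (rfl | hw) huw hfu hfw
    · exact absurd rfl huw
    · exact iff_of_false (hv w) (not_not.2 (hA w hw hfw).symm)
    · exact iff_of_false (fun h => hv u h.symm) (not_not.2 (hA u hu hfu))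
    · exact hf.adj_iff_ne u hu w hw huw hfu hfw
  · rintro u (rfl | hu) w (rfl | hw) huw hfu hfw
    · exact absurd rfl huw
    · omega
    · omega
    · exact hf.adj_iff_eq u hu w hw huw hfu hfw

end IsPolarLabellingOn

theorem _root_.IsMinimalPolarObstruction.ncard_isIsolated_le (hG : IsMinimalPolarObstruction G s k) :
    {v | G.IsIsolated v}.ncard ≤ k + 1 := by
  classical
  rcases {v | G.IsIsolated v}.eq_empty_or_nonempty with hI | ⟨v, hv⟩
  · simp [hI]
  obtain ⟨f, hf⟩ := exists_isPolarLabellingOn_of_isSKPolar_induce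
    (hG.2 {v}ᶜ fun h => (h ▸ mem_univ v : v ∈ ({v}ᶜ : Set V)) rfl)
  have hB : ∀ u ∈ {v | G.IsIsolated v} \ {v}, s ≤ f u := by
    rintro u ⟨hu, huv⟩
    refine not_lt.1 fun hfu => hG.1 ?_
    have hg : G.IsPolarLabellingOn s k {v}ᶜ (Function.update f v (f u)) :=
      hf.congr fun w hw => (Function.update_of_ne hw _ _).symm
    have hG' := hg.insert_of_isIsolated hv (by simpa using hfu) fun w hw hfw => by
      simp only [Function.update_self, Function.update_of_ne hw] at hfw ⊢
      exact hf.eq_of_isIsolated huv hw hu hfu hfw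
    rw [show insert v {v}ᶜ = univ by ext; simp [em]] at hG'
    exact isSKPolar_of_isPolarLabellingOn_univ hG'
  calc {v | G.IsIsolated v}.ncard ≤ ({v | G.IsIsolated v} \ {v}).ncard + ({v} : Set V).ncard :=
        ncard_le_ncard_sdiff_add_ncard _ _
    _ ≤ k + 1 := by
      rw [ncard_singleton]
      gcongr
      exact hf.ncard_le_of_isIsolated (fun u hu => hu.2) (fun u hu => hu.1) hB

end SimpleGraph

theorem minimal_kPolar_obstruction_trivial_components_le_general {k : ℕ}
    {V : Type*} (G : SimpleGraph V)
    (hG : IsMinimalPolarObstruction G k k) :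
    Nat.card {c : G.ConnectedComponent // c.supp.Subsingleton} ≤ k + 1 := by
  exact (Nat.card_congr SimpleGraph.trivialComponentsEquivIsolated).trans_le hG.ncard_isIsolated_le

/-- Every minimal `k`-polar obstruction has at most `k + 1` trivial connected components
(components consisting of a single vertex, i.e., isolated vertices). -/
theorem minimal_kPolar_obstruction_trivial_components_le {k : ℕ} (hk : 0 < k)
    {V : Type*} [Fintype V] (G : SimpleGraph V)
    (hG : IsMinimalPolarObstruction G k k) :
    Nat.card {c : G.ConnectedComponent // c.supp.Subsingleton} ≤ k + 1 :=
  minimal_kPolar_obstruction_trivial_components_le_general G hG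
end

section
/- If a minimal k-polar obstruction H has at least one trivial connected component (an isolated vertex), then H has at most one connected component that does not induce a complete graph. -/
private lemma walk_const' {V : Type*} {G : SimpleGraph V} {F : V → ℕ} {k : ℕ}
    {c : G.ConnectedComponent}
    (hP : ∀ x y : V, x ≠ y → k ≤ F x → k ≤ F y → G.Adj x y → F x = F y)
    (hsupp : ∀ x ∈ c.supp, k ≤ F x) :
    ∀ {a b : V}, G.Walk a b → a ∈ c.supp → F a = F b := by
  intro a b w
  induction w with
  | nil => intro _; rfl
  | @cons a x b h p ih =>
      intro ha
      have hx : x ∈ c.supp := by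
        rw [SimpleGraph.ConnectedComponent.mem_supp_iff] at ha ⊢
        rw [← ha]
        exact SimpleGraph.ConnectedComponent.sound h.reachable.symm
      exact (hP a x h.ne (hsupp a ha) (hsupp x hx) h).trans (ih hx)

/-- If a minimal `k`-polar obstruction has at least one trivial connected component
(an isolated vertex), then it has at most one connected component that does not
induce a complete graph. -/
theorem minimal_kPolar_obstruction_at_most_one_noncomplete_component {k : ℕ} (hk : 0 < k)
    {V : Type*} [Fintype V] (G : SimpleGraph V)
    (hG : IsMinimalPolarObstruction G k k)
    (hiso : ∃ v : V, ∀ u : V, ¬ G.Adj v u) :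
    ∀ c d : G.ConnectedComponent, ¬ G.IsClique c.supp → ¬ G.IsClique d.supp → c = d := by
  classical
  obtain ⟨v, hv⟩ := hiso
  intro c d hc hd
  by_contra hcd
  have hS : ({x : V | x ≠ v} : Set V) ≠ Set.univ := by
    intro h
    have : v ∈ ({x : V | x ≠ v} : Set V) := h ▸ Set.mem_univ v
    exact this rfl
  obtain ⟨f, hb, hA, hB⟩ := hG.2 _ hS
  set F : V → ℕ := fun x => if h : x ≠ v then f ⟨x, h⟩ else 0 with hF
  have hFeq : ∀ (x : V) (hx : x ≠ v), F x = f ⟨x, hx⟩ := fun x hx => dif_pos hx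
  have hFv : F v = 0 := dif_neg (fun h => h rfl)
  have P1 : ∀ x y : V, x ≠ y → ∀ (hx : x ≠ v) (hy : y ≠ v), F x < k → F y < k →
      (G.Adj x y ↔ F x ≠ F y) := by
    intro x y hxy hx hy h1 h2
    rw [hFeq x hx] at h1 ⊢
    rw [hFeq y hy] at h2 ⊢
    have hne : (⟨x, hx⟩ : {x : V | x ≠ v}) ≠ ⟨y, hy⟩ := by
      simp [Subtype.ext_iff, hxy]
    have := hA ⟨x, hx⟩ ⟨y, hy⟩ hne h1 h2
    simpa using this
  have P2 : ∀ x y : V, x ≠ y → ∀ (hx : x ≠ v) (hy : y ≠ v), k ≤ F x → k ≤ F y →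
      (G.Adj x y ↔ F x = F y) := by
    intro x y hxy hx hy h1 h2
    rw [hFeq x hx] at h1 ⊢
    rw [hFeq y hy] at h2 ⊢
    have hne : (⟨x, hx⟩ : {x : V | x ≠ v}) ≠ ⟨y, hy⟩ := by
      simp [Subtype.ext_iff, hxy]
    have := hB ⟨x, hx⟩ ⟨y, hy⟩ hne h1 h2
    simpa using this
  have hnev : ∀ (e : G.ConnectedComponent), ¬ G.IsClique e.supp →
      ∀ x ∈ e.supp, x ≠ v := by
    intro e he x hx hxv
    subst hxv
    apply he
    intro a ha b hb hab
    exfalso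
    rw [SimpleGraph.ConnectedComponent.mem_supp_iff] at ha hb hx
    have hav : G.Reachable a x := SimpleGraph.ConnectedComponent.exact (ha.trans hx.symm)
    have hbv : G.Reachable b x := SimpleGraph.ConnectedComponent.exact (hb.trans hx.symm)
    have h1 : x = a := by
      obtain ⟨w⟩ := hav.symm
      cases w with
      | nil => rfl
      | cons h' _ => exact absurd h' (hv _)
    have h2 : x = b := by
      obtain ⟨w⟩ := hbv.symm
      cases w with
      | nil => rfl
      | cons h' _ => exact absurd h' (hv _)
    exact hab (h1 ▸ h2)
  have hP2' : ∀ x y : V, x ≠ y → k ≤ F x → k ≤ F y → G.Adj x y → F x = F y := by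
    intro x y hxy h1 h2 hadj
    have hxv : x ≠ v := by rintro rfl; rw [hFv] at h1; omega
    have hyv : y ≠ v := by rintro rfl; rw [hFv] at h2; omega
    exact (P2 x y hxy hxv hyv h1 h2).mp hadj
  have key : ∀ (e : G.ConnectedComponent), ¬ G.IsClique e.supp →
      ∃ x ∈ e.supp, F x < k := by
    intro e he
    by_contra h
    push_neg at h
    apply he
    intro a ha b hb hab
    have hrab : G.Reachable a b := by
      rw [SimpleGraph.ConnectedComponent.mem_supp_iff] at ha hb
      exact SimpleGraph.ConnectedComponent.exact (ha.trans hb.symm)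
    obtain ⟨w⟩ := hrab
    have heq : F a = F b := walk_const' hP2' h w ha
    have hav : a ≠ v := by
      intro hh; have h2 := h a ha; rw [hh, hFv] at h2; omega
    have hbv : b ≠ v := by
      intro hh; have h2 := h b hb; rw [hh, hFv] at h2; omega
    exact (P2 a b hab hav hbv (h a ha) (h b hb)).mpr heq
  obtain ⟨x, hxc, hxk⟩ := key c hc
  obtain ⟨y, hyd, hyk⟩ := key d hd
  have hxv := hnev c hc x hxc
  have hyv := hnev d hd y hyd
  have hcx : c = G.connectedComponentMk x :=
    ((SimpleGraph.ConnectedComponent.mem_supp_iff c x).mp hxc).symm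
  have hdy : d = G.connectedComponentMk y :=
    ((SimpleGraph.ConnectedComponent.mem_supp_iff d y).mp hyd).symm
  have hxy : x ≠ y := by
    rintro rfl; exact hcd (hcx.trans hdy.symm)
  have hnadj : ¬ G.Adj x y := by
    intro h
    exact hcd (hcx.trans ((SimpleGraph.ConnectedComponent.sound h.reachable).trans hdy.symm))
  have hFxy : F x = F y := by
    by_contra h
    exact hnadj ((P1 x y hxy hxv hyv hxk hyk).mpr h)
  have hall : ∀ p : V, p ≠ v → F p < k → F p = F x := by
    intro p hpv hpk
    by_contra hp
    have hpx : p ≠ x := fun h => hp (h ▸ rfl)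
    have hpy : p ≠ y := fun h => hp (by rw [h, hFxy])
    have h1 : G.Adj p x := (P1 p x hpx hpv hxv hpk hxk).mpr hp
    have h2 : G.Adj p y := (P1 p y hpy hpv hyv hpk hyk).mpr (fun hh => hp (hh.trans hFxy.symm))
    apply hcd
    calc c = G.connectedComponentMk x := hcx
      _ = G.connectedComponentMk p := SimpleGraph.ConnectedComponent.sound h1.reachable.symm
      _ = G.connectedComponentMk y := SimpleGraph.ConnectedComponent.sound h2.reachable
      _ = d := hdy.symm
  refine hG.1 ⟨fun z => if z = v then F x else F z, ?_, ?_, ?_⟩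
  · intro z
    dsimp only
    by_cases hz : z = v
    · rw [if_pos hz]; omega
    · rw [if_neg hz, hFeq z hz]; exact hb _
  · intro u w huw h1 h2
    dsimp only at h1 h2 ⊢
    by_cases hu : u = v
    · have hw : w ≠ v := fun h => huw (hu.trans h.symm)
      rw [if_pos hu] at h1 ⊢
      rw [if_neg hw] at h2 ⊢
      rw [hu]
      simp [hv w, hall w hw h2]
    · rw [if_neg hu] at h1 ⊢
      by_cases hw : w = v
      · rw [if_pos hw] at h2 ⊢
        rw [hw]
        have hnaj : ¬ G.Adj u v := fun h => hv u h.symm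
        simp [hnaj, hall u hu h1]
      · rw [if_neg hw] at h2 ⊢
        exact P1 u w huw hu hw h1 h2
  · intro u w huw h1 h2
    dsimp only at h1 h2 ⊢
    have hu : u ≠ v := by
      intro h; rw [if_pos h] at h1; omega
    have hw : w ≠ v := by
      intro h; rw [if_pos h] at h2; omega
    rw [if_neg hu] at h1 ⊢
    rw [if_neg hw] at h2 ⊢
    exact P2 u w huw hu hw h1 h2
end

section
/- If H is a minimal k-polar obstruction with fewer than (k+1)^2 vertices (i.e., H is not extremal), then every connected component of H that induces a complete graph has at most two vertices, i.e., is isomorphic to K_1 or K_2. -/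
/-- If `H` is a minimal `k`-polar obstruction with fewer than `(k+1)^2` vertices
(i.e., not extremal), then every connected component inducing a complete graph
has at most two vertices (is a `K₁` or a `K₂`). -/
theorem minimal_kPolar_obstruction_complete_components_small {k : ℕ} (hk : 0 < k)
    {V : Type*} [Fintype V] (G : SimpleGraph V)
    (hG : IsMinimalPolarObstruction G k k)
    (hcard : Fintype.card V < (k + 1) ^ 2) :
    ∀ c : G.ConnectedComponent, G.IsClique c.supp → c.supp.ncard ≤ 2 := by
  classical
  intro c hclique
  by_contra hbig
  push_neg at hbig
  set C : Set V := c.supp with hCdef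
  -- C is closed under adjacency
  have hmemC : ∀ {x y : V}, x ∈ C → G.Adj x y → y ∈ C := by
    intro x y hx hxy
    rw [SimpleGraph.ConnectedComponent.mem_supp_iff] at hx ⊢
    rw [← hx]
    exact (SimpleGraph.ConnectedComponent.sound hxy.symm.reachable)
  have hadjC : ∀ {x y : V}, x ∈ C → y ∈ C → x ≠ y → G.Adj x y := by
    intro x y hx hy hxy
    exact hclique hx hy hxy
  -- extract three distinct vertices v, a, b of C
  obtain ⟨v, hv, a, ha, b, hb, hva, hvb, hab⟩ := (Set.two_lt_ncard (Set.toFinite C)).mp hbig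
  have hav : a ≠ v := hva.symm
  have hbv : b ≠ v := hvb.symm
  -- the polar partition of G - v
  have hS : ({v}ᶜ : Set V) ≠ Set.univ := by
    intro h
    have : v ∈ ({v}ᶜ : Set V) := h ▸ Set.mem_univ v
    exact this rfl
  obtain ⟨f0, hf01, hf02, hf03⟩ := hG.2 ({v}ᶜ : Set V) hS
  set f : V → ℕ := fun x => if h : x = v then 0 else f0 ⟨x, h⟩ with hfdef
  have hlt : ∀ x, x ≠ v → f x < k + k := by
    intro x hx
    simp only [hfdef, dif_neg hx]
    exact hf01 _
  have hP2 : ∀ x y, x ≠ v → y ≠ v → x ≠ y → f x < k → f y < k →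
      (G.Adj x y ↔ f x ≠ f y) := by
    intro x y hx hy hxy h1 h2
    simp only [hfdef, dif_neg hx, dif_neg hy] at h1 h2 ⊢
    have := hf02 ⟨x, hx⟩ ⟨y, hy⟩ (by simp [Subtype.ext_iff, hxy]) h1 h2
    simpa using this
  have hP3 : ∀ x y, x ≠ v → y ≠ v → x ≠ y → k ≤ f x → k ≤ f y →
      (G.Adj x y ↔ f x = f y) := by
    intro x y hx hy hxy h1 h2
    simp only [hfdef, dif_neg hx, dif_neg hy] at h1 h2 ⊢
    have := hf03 ⟨x, hx⟩ ⟨y, hy⟩ (by simp [Subtype.ext_iff, hxy]) h1 h2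
    simpa using this
  -- vertices outside C are never equal to v
  have hnotC_ne_v : ∀ {w : V}, w ∉ C → w ≠ v := fun hw h => hw (h ▸ hv)
  -- Key lemma: no label q in [k, k+k) can be reserved for C
  have hkey : ∀ q, k ≤ q → q < k + k → (∀ w, w ∉ C → f w ≠ q) → False := by
    intro q hq1 hq2 hout
    apply hG.1
    refine ⟨fun x => if x ∈ C then q else f x, ?_, ?_, ?_⟩
    · intro x
      by_cases hx : x ∈ C
      · simpa [hx] using hq2
      · simpa [hx] using hlt x (hnotC_ne_v hx)
    · intro x y hxy h1 h2
      by_cases hx : x ∈ C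
      · simp only [if_pos hx] at h1; omega
      by_cases hy : y ∈ C
      · simp only [if_pos hy] at h2; omega
      simp only [if_neg hx, if_neg hy] at h1 h2 ⊢
      exact hP2 x y (hnotC_ne_v hx) (hnotC_ne_v hy) hxy h1 h2
    · intro x y hxy h1 h2
      by_cases hx : x ∈ C <;> by_cases hy : y ∈ C
      · simp only [if_pos hx, if_pos hy]
        exact iff_of_true (hadjC hx hy hxy) (by trivial)
      · simp only [if_pos hx, if_neg hy]
        constructor
        · intro hadj; exact absurd (hmemC hx hadj) hy
        · intro heq; exact absurd heq.symm (hout y hy)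
      · simp only [if_neg hx, if_pos hy]
        constructor
        · intro hadj; exact absurd (hmemC hy hadj.symm) hx
        · intro heq; exact absurd heq (hout x hx)
      · simp only [if_neg hx, if_neg hy] at h1 h2 ⊢
        exact hP3 x y (hnotC_ne_v hx) (hnotC_ne_v hy) hxy h1 h2
  -- Step 2: every vertex of C other than v gets a label < k
  have hClow : ∀ u, u ∈ C → u ≠ v → f u < k := by
    intro u huC huv
    by_contra h
    push_neg at h
    refine hkey (f u) h (hlt u huv) ?_
    intro w hwC hfw
    have hwv : w ≠ v := hnotC_ne_v hwC
    have huw : u ≠ w := fun h' => hwC (h' ▸ huC)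
    have hadj : G.Adj u w := (hP3 u w huv hwv huw h (hfw ▸ h)).mpr hfw.symm
    exact hwC (hmemC huC hadj)
  -- Step 4: every vertex outside C gets a label ≥ k
  have houtB : ∀ w, w ∉ C → k ≤ f w := by
    intro w hwC
    by_contra h
    push_neg at h
    have hwv : w ≠ v := hnotC_ne_v hwC
    have hwa : w ≠ a := fun h' => hwC (h' ▸ ha)
    have hwb : w ≠ b := fun h' => hwC (h' ▸ hb)
    have hfa : f a < k := hClow a ha hav
    have hfb : f b < k := hClow b hb hbv
    have hnadja : ¬ G.Adj w a := fun hadj => hwC (hmemC ha hadj.symm)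
    have hnadjb : ¬ G.Adj w b := fun hadj => hwC (hmemC hb hadj.symm)
    have h1 : f w = f a := by
      by_contra hne
      exact hnadja ((hP2 w a hwv hav hwa h hfa).mpr hne)
    have h2 : f w = f b := by
      by_contra hne
      exact hnadjb ((hP2 w b hwv hbv hwb h hfb).mpr hne)
    have hfab : f a ≠ f b := (hP2 a b hav hbv hab hfa hfb).mp (hadjC ha hb hab)
    exact hfab (h1 ▸ h2 ▸ rfl)
  -- Step 5: f restricted to C \ {v} is surjective onto [0, k)
  have hsurj : ∀ p, p < k → ∃ u, u ∈ C ∧ u ≠ v ∧ f u = p := by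
    intro p hp
    by_contra hcon
    push_neg at hcon
    apply hG.1
    refine ⟨fun x => if x = v then p else f x, ?_, ?_, ?_⟩
    · intro x
      by_cases hx : x = v
      · simp [hx]; omega
      · simpa [hx] using hlt x hx
    · intro x y hxy h1 h2
      by_cases hx : x = v <;> by_cases hy : y = v
      · exact absurd (hx.trans hy.symm) hxy
      · rw [hx] at hxy ⊢
        simp only [if_pos rfl, if_neg hy] at h2 ⊢
        have hyC : y ∈ C := by
          by_contra hyc
          exact absurd h2 (not_lt.mpr (houtB y hyc))
        have hadj : G.Adj v y := hadjC hv hyC hxy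
        exact iff_of_true hadj (fun h => hcon y hyC hy h.symm)
      · rw [hy] at hxy ⊢
        simp only [if_pos rfl, if_neg hx] at h1 ⊢
        have hxC : x ∈ C := by
          by_contra hxc
          exact absurd h1 (not_lt.mpr (houtB x hxc))
        have hadj : G.Adj x v := hadjC hxC hv hxy
        exact iff_of_true hadj (fun h => hcon x hxC hx h)
      · simp only [if_neg hx, if_neg hy] at h1 h2 ⊢
        exact hP2 x y hx hy hxy h1 h2
    · intro x y hxy h1 h2
      have hx : x ≠ v := by
        intro h
        simp only [if_pos h] at h1
        omega
      have hy : y ≠ v := by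
        intro h
        simp only [if_pos h] at h2
        omega
      simp only [if_neg hx, if_neg hy] at h1 h2 ⊢
      exact hP3 x y hx hy hxy h1 h2
  -- Step 6: each clique fiber outside C has at least k+1 vertices
  have hDq : ∀ q, k ≤ q → q < k + k →
      k + 1 ≤ (Finset.univ.filter (fun w => w ∉ C ∧ f w = q)).card := by
    intro q hq1 hq2
    by_contra hcon
    push_neg at hcon
    set Dq : Finset V := Finset.univ.filter (fun w => w ∉ C ∧ f w = q) with hDqdef
    have hcard' : Fintype.card ↥(Dq : Finset V) ≤ Fintype.card (Fin k) := by
      rw [Fintype.card_coe, Fintype.card_fin]; omega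
    obtain ⟨e⟩ := Function.Embedding.nonempty_of_card_le hcard'
    apply hG.1
    refine ⟨fun x => if h : x ∈ Dq then (e ⟨x, h⟩ : ℕ)
      else if x ∈ C then q else f x, ?_, ?_, ?_⟩
    · intro x
      by_cases hx : x ∈ Dq
      · have := (e ⟨x, hx⟩).isLt
        simp only [dif_pos hx]; omega
      by_cases hxC : x ∈ C
      · simp only [dif_neg hx, if_pos hxC]; omega
      · simp only [dif_neg hx, if_neg hxC]
        exact hlt x (hnotC_ne_v hxC)
    · intro x y hxy h1 h2
      have hxD : x ∈ Dq := by
        by_contra hx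
        simp only [dif_neg hx] at h1
        by_cases hxC : x ∈ C
        · simp only [if_pos hxC] at h1; omega
        · simp only [if_neg hxC] at h1
          exact absurd h1 (not_lt.mpr (houtB x hxC))
      have hyD : y ∈ Dq := by
        by_contra hy
        simp only [dif_neg hy] at h2
        by_cases hyC : y ∈ C
        · simp only [if_pos hyC] at h2; omega
        · simp only [if_neg hyC] at h2
          exact absurd h2 (not_lt.mpr (houtB y hyC))
      simp only [dif_pos hxD, dif_pos hyD]
      have hxprop := Finset.mem_filter.mp hxD
      have hyprop := Finset.mem_filter.mp hyD
      have hadj : G.Adj x y := by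
        refine (hP3 x y (hnotC_ne_v hxprop.2.1) (hnotC_ne_v hyprop.2.1) hxy ?_ ?_).mpr ?_
        · rw [hxprop.2.2]; exact hq1
        · rw [hyprop.2.2]; exact hq1
        · rw [hxprop.2.2, hyprop.2.2]
      have hne : (e ⟨x, hxD⟩ : ℕ) ≠ (e ⟨y, hyD⟩ : ℕ) := by
        intro h
        have : (⟨x, hxD⟩ : ↥(Dq : Finset V)) = ⟨y, hyD⟩ := e.injective (Fin.val_injective h)
        exact hxy (congrArg Subtype.val this)
      exact ⟨fun _ => hne, fun _ => hadj⟩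
    · intro x y hxy h1 h2
      have hxD : x ∉ Dq := by
        intro hx
        simp only [dif_pos hx] at h1
        have := (e ⟨x, hx⟩).isLt
        omega
      have hyD : y ∉ Dq := by
        intro hy
        simp only [dif_pos hy] at h2
        have := (e ⟨y, hy⟩).isLt
        omega
      simp only [dif_neg hxD] at h1 ⊢
      simp only [dif_neg hyD] at h2 ⊢
      by_cases hx : x ∈ C <;> by_cases hy : y ∈ C
      · simp only [if_pos hx, if_pos hy]
        exact iff_of_true (hadjC hx hy hxy) (by trivial)
      · simp only [if_pos hx, if_neg hy]
        have hfy : f y ≠ q := by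
          intro h
          exact hyD (Finset.mem_filter.mpr ⟨Finset.mem_univ y, hy, h⟩)
        constructor
        · intro hadj; exact absurd (hmemC hx hadj) hy
        · intro heq; exact absurd heq.symm hfy
      · simp only [if_neg hx, if_pos hy]
        have hfx : f x ≠ q := by
          intro h
          exact hxD (Finset.mem_filter.mpr ⟨Finset.mem_univ x, hx, h⟩)
        constructor
        · intro hadj; exact absurd (hmemC hy hadj.symm) hx
        · intro heq; exact absurd heq hfx
      · simp only [if_neg hx, if_neg hy] at h1 h2 ⊢
        exact hP3 x y (hnotC_ne_v hx) (hnotC_ne_v hy) hxy h1 h2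
  -- Step 7: counting
  set φ : V → ℕ := fun x => if x ∈ C then k + k else f x with hφdef
  have hφmem : ∀ x ∈ (Finset.univ : Finset V), φ x ∈ Finset.Icc k (k + k) := by
    intro x _
    rw [Finset.mem_Icc]
    by_cases hx : x ∈ C
    · simp only [hφdef, if_pos hx]
      omega
    · simp only [hφdef, if_neg hx]
      exact ⟨houtB x hx, le_of_lt (hlt x (hnotC_ne_v hx))⟩
  have hsum := Finset.card_eq_sum_card_fiberwise hφmem
  -- the fiber over k + k contains C, which has at least k + 1 elements
  have hCfin : k + 1 ≤ (Finset.univ.filter (fun x => x ∈ C)).card := by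
    set Cfin := Finset.univ.filter (fun x => x ∈ C) with hCfindef
    have hvC : v ∈ Cfin := Finset.mem_filter.mpr ⟨Finset.mem_univ v, hv⟩
    have hsurj' : Set.SurjOn f ↑(Cfin.erase v) ↑(Finset.range k) := by
      intro p hp
      rw [Finset.coe_range, Set.mem_Iio] at hp
      obtain ⟨u, huC, huv, hfu⟩ := hsurj p hp
      exact ⟨u, by
        simp only [Finset.coe_erase, Set.mem_diff, Finset.mem_coe,
          Set.mem_singleton_iff]
        exact ⟨Finset.mem_filter.mpr ⟨Finset.mem_univ u, huC⟩, huv⟩, hfu⟩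
    have h1 : (Finset.range k).card ≤ (Cfin.erase v).card :=
      Finset.card_le_card_of_surjOn f hsurj'
    rw [Finset.card_range] at h1
    have h2 : (Cfin.erase v).card = Cfin.card - 1 := Finset.card_erase_of_mem hvC
    have h3 : 1 ≤ Cfin.card := Finset.card_pos.mpr ⟨v, hvC⟩
    omega
  have hfibers : ∀ q ∈ Finset.Icc k (k + k),
      k + 1 ≤ (Finset.univ.filter (fun x => φ x = q)).card := by
    intro q hq
    rw [Finset.mem_Icc] at hq
    rcases eq_or_lt_of_le hq.2 with heq | hlt'
    · subst heq
      refine le_trans hCfin (Finset.card_le_card ?_)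
      intro x hx
      rw [Finset.mem_filter] at hx ⊢
      exact ⟨hx.1, by simp [hφdef, hx.2]⟩
    · refine le_trans (hDq q hq.1 hlt') (Finset.card_le_card ?_)
      intro x hx
      rw [Finset.mem_filter] at hx ⊢
      refine ⟨hx.1, ?_⟩
      simp only [hφdef, if_neg hx.2.1]
      exact hx.2.2
  have hmul : (Finset.Icc k (k + k)).card • (k + 1) ≤
      ∑ q ∈ Finset.Icc k (k + k), (Finset.univ.filter (fun x => φ x = q)).card :=
    Finset.card_nsmul_le_sum _ _ _ hfibers
  rw [Nat.card_Icc] at hmul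
  have hIccCard : k + k + 1 - k = k + 1 := by omega
  rw [hIccCard, smul_eq_mul] at hmul
  rw [← hsum, Finset.card_univ] at hmul
  have : (k + 1) ^ 2 = (k + 1) * (k + 1) := sq (k + 1)
  omega
end

section
/- Every minimal k-polar obstruction with exactly k+2 connected components has at least one trivial connected component (an isolated vertex). -/
open SimpleGraph

section PolarLabelling

variable {V : Type*} {H : SimpleGraph V} {s k : ℕ} {f : V → ℕ}

def IsPolarLabelling (H : SimpleGraph V) (s k : ℕ) (f : V → ℕ) : Prop :=
  (∀ v, f v < s + k) ∧
    (∀ u v, u ≠ v → f u < s → f v < s → (H.Adj u v ↔ f u ≠ f v)) ∧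
    (∀ u v, u ≠ v → s ≤ f u → s ≤ f v → (H.Adj u v ↔ f u = f v))

theorem isSKPolar_iff_exists_isPolarLabelling :
    IsSKPolar H s k ↔ ∃ f, IsPolarLabelling H s k f :=
  Iff.rfl

namespace IsPolarLabelling

theorem lt_add (hf : IsPolarLabelling H s k f) (u : V) : f u < s + k :=
  hf.1 u

theorem adj_of_lt_of_ne (hf : IsPolarLabelling H s k f) {a b : V} (ha : f a < s) (hb : f b < s)
    (hab : f a ≠ f b) : H.Adj a b :=
  (hf.2.1 a b (fun h => hab (congrArg f h)) ha hb).2 hab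

theorem ne_of_adj_of_lt (hf : IsPolarLabelling H s k f) {a b : V} (hadj : H.Adj a b)
    (ha : f a < s) (hb : f b < s) : f a ≠ f b :=
  (hf.2.1 a b hadj.ne ha hb).1 hadj

theorem reachable_of_le_of_eq (hf : IsPolarLabelling H s k f) {a b : V} (ha : s ≤ f a)
    (hb : s ≤ f b) (hab : f a = f b) : H.Reachable a b := by
  by_cases h : a = b
  · exact h ▸ Reachable.refl a
  · exact ((hf.2.2 a b h ha hb).2 hab).reachable

theorem reachable_of_lt (hf : IsPolarLabelling H s k f) {a b u : V} (ha : f a < s)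
    (hb : f b < s) (hab : f a ≠ f b) (hu : f u < s) : H.Reachable u a := by
  by_cases hua : f u = f a
  · have hub : f u ≠ f b := hua ▸ hab
    exact (hf.adj_of_lt_of_ne hu hb hub).reachable.trans
      (hf.adj_of_lt_of_ne hb ha (Ne.symm hab)).reachable
  · exact (hf.adj_of_lt_of_ne hu ha hua).reachable

end IsPolarLabelling

end PolarLabelling

section DeleteVertex

variable {V : Type*} {G : SimpleGraph V} {v : V}

theorem SimpleGraph.ConnectedComponent.exists_compl_singleton_mk_eq (hG : ∀ u, ∃ w, G.Adj u w)
    (D : G.ConnectedComponent) : ∃ u : ({v}ᶜ : Set V), G.connectedComponentMk u = D := by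
  obtain ⟨w, rfl⟩ := D.exists_rep
  by_cases hw : w = v
  · obtain ⟨x, hx⟩ := hG w
    exact ⟨⟨x, hw ▸ hx.ne'⟩, (ConnectedComponent.connectedComponentMk_eq_of_adj hx).symm⟩
  · exact ⟨⟨w, hw⟩, rfl⟩

theorem SimpleGraph.ConnectedComponent.exists_adj_compl_singleton (hG : ∀ u, ∃ w, G.Adj u w)
    {D : G.ConnectedComponent} (hD : G.connectedComponentMk v ≠ D) :
    ∃ a b : ({v}ᶜ : Set V), G.connectedComponentMk a = D ∧ G.Adj a b := by
  obtain ⟨w, rfl⟩ := D.exists_rep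
  have hw : w ≠ v := by rintro rfl; exact hD rfl
  obtain ⟨x, hx⟩ := hG w
  have hxv : x ≠ v := by
    rintro rfl
    exact hD (ConnectedComponent.connectedComponentMk_eq_of_adj hx.symm)
  exact ⟨⟨w, hw⟩, ⟨x, hxv⟩, rfl, hx⟩

variable {s k : ℕ} {f : ({v}ᶜ : Set V) → ℕ}

theorem IsPolarLabelling.subsingleton_setOf_forall_lt (hG : ∀ u, ∃ w, G.Adj u w)
    (hf : IsPolarLabelling (G.induce {v}ᶜ) s k f) :
    {D : G.ConnectedComponent |
      ∀ u : ({v}ᶜ : Set V), G.connectedComponentMk u = D → f u < s}.Subsingleton := by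
  have key : ∀ D₁ D₂ : G.ConnectedComponent,
      (∀ u : ({v}ᶜ : Set V), G.connectedComponentMk u = D₁ → f u < s) →
      (∀ u : ({v}ᶜ : Set V), G.connectedComponentMk u = D₂ → f u < s) →
      G.connectedComponentMk v ≠ D₂ → D₁ = D₂ := by
    intro D₁ D₂ h₁ h₂ hv
    obtain ⟨a, b, rfl, hab⟩ := ConnectedComponent.exists_adj_compl_singleton hG hv
    obtain ⟨u, rfl⟩ := ConnectedComponent.exists_compl_singleton_mk_eq (v := v) hG D₁
    have ha := h₂ a rfl
    have hb := h₂ b (ConnectedComponent.connectedComponentMk_eq_of_adj hab).symm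
    exact ConnectedComponent.sound <|
      (hf.reachable_of_lt ha hb (hf.ne_of_adj_of_lt hab ha hb) (h₁ u rfl)).map
        (Embedding.induce _).toHom
  intro D₁ h₁ D₂ h₂
  by_cases hD : D₁ = D₂
  · exact hD
  by_cases hv : G.connectedComponentMk v = D₂
  · exact (key D₂ D₁ h₂ h₁ (hv ▸ Ne.symm hD)).symm
  · exact key D₁ D₂ h₁ h₂ hv

theorem card_connectedComponent_le_of_isSKPolar_induce_compl_singleton
    (hG : ∀ u, ∃ w, G.Adj u w) (hpolar : IsSKPolar (G.induce {v}ᶜ) s k) :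
    Nat.card G.ConnectedComponent ≤ k + 1 := by
  classical
  obtain ⟨f, hf⟩ := isSKPolar_iff_exists_isPolarLabelling.1 hpolar
  let clique : G.ConnectedComponent → Option (Fin k) := fun D =>
    if h : ∃ u : ({v}ᶜ : Set V), G.connectedComponentMk u = D ∧ s ≤ f u then
      some ⟨f h.choose - s, by have := hf.lt_add h.choose; omega⟩
    else none
  have hclique : Function.Injective clique := by
    intro D₁ D₂ h
    by_cases h₁ : ∃ u : ({v}ᶜ : Set V), G.connectedComponentMk u = D₁ ∧ s ≤ f u <;>
      by_cases h₂ : ∃ u : ({v}ᶜ : Set V), G.connectedComponentMk u = D₂ ∧ s ≤ f u <;>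
      simp only [clique, h₁, h₂, dite_true, dite_false, Option.some.injEq, Fin.mk.injEq,
        reduceCtorEq] at h
    · obtain ⟨hu₁, hs₁⟩ := h₁.choose_spec
      obtain ⟨hu₂, hs₂⟩ := h₂.choose_spec
      rw [← hu₁, ← hu₂]
      exact ConnectedComponent.sound <|
        (hf.reachable_of_le_of_eq hs₁ hs₂ (by omega)).map (Embedding.induce _).toHom
    · push Not at h₁ h₂
      exact hf.subsingleton_setOf_forall_lt hG h₁ h₂
  calc Nat.card G.ConnectedComponent ≤ Nat.card (Option (Fin k)) :=
        Nat.card_le_card_of_injective clique hclique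
    _ = k + 1 := by simp

end DeleteVertex

theorem minimal_kPolar_obstruction_kplus2_components_has_isolated_general {k : ℕ}
    {V : Type*} (G : SimpleGraph V)
    (hG : IsMinimalPolarObstruction G k k)
    (hcomp : Nat.card G.ConnectedComponent = k + 2) :
    ∃ v : V, ∀ u : V, ¬ G.Adj v u := by
  by_contra! hiso
  obtain ⟨v⟩ : Nonempty V := by
    by_contra hV
    rw [not_nonempty_iff] at hV
    simp at hcomp
  have hv : ({v}ᶜ : Set V) ≠ Set.univ := (Set.ne_univ_iff_exists_notMem _).2 ⟨v, by simp⟩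
  have hle := card_connectedComponent_le_of_isSKPolar_induce_compl_singleton hiso (hG.2 _ hv)
  omega

/-- Every minimal `k`-polar obstruction with exactly `k+2` connected components
has at least one trivial connected component, i.e., an isolated vertex. -/
theorem minimal_kPolar_obstruction_kplus2_components_has_isolated {k : ℕ} (hk : 0 < k)
    {V : Type*} [Fintype V] (G : SimpleGraph V)
    (hG : IsMinimalPolarObstruction G k k)
    (hcomp : Nat.card G.ConnectedComponent = k + 2) :
    ∃ v : V, ∀ u : V, ¬ G.Adj v u :=
  minimal_kPolar_obstruction_kplus2_components_has_isolated_general G hG hcomp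
end

section
/- If H is a 2-polar graph and v is a vertex of H, then the graph H' obtained from H by switching on v (i.e., H' has the same vertex set as H, v is adjacent in H' to exactly those vertices distinct from v that are not neighbors of v in H, and all adjacencies not involving v are unchanged) is also 2-polar. -/
/-- The graph obtained from `G` by switching on the vertex `x`: adjacencies involving `x`
are complemented, all other adjacencies are unchanged. -/
def switching {V : Type*} [DecidableEq V] (G : SimpleGraph V) (x : V) : SimpleGraph V :=
  SimpleGraph.fromRel (fun u v => if u = x ∨ v = x then ¬ G.Adj u v else G.Adj u v)

lemma switching_adj {V : Type*} [DecidableEq V] (G : SimpleGraph V) (x u w : V) :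
    (switching G x).Adj u w ↔ u ≠ w ∧ (if u = x ∨ w = x then ¬ G.Adj u w else G.Adj u w) := by
  by_cases hu : u = x <;> by_cases hw : w = x <;>
    simp [switching, SimpleGraph.fromRel_adj, hu, hw, G.adj_comm]

/-- If `H` is a `2`-polar graph and `v` is a vertex of `H`, then the graph obtained
from `H` by switching on `v` is also `2`-polar. -/
theorem switching_preserves_twoPolar {V : Type*} [DecidableEq V]
    (H : SimpleGraph V) (hH : IsSKPolar H 2 2) (v : V) :
    IsSKPolar (switching H v) 2 2 := by
  classical
  obtain ⟨f, hf4, hA, hB⟩ := hH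
  refine ⟨fun u => if u = v then (if f v = 0 then 1 else if f v = 1 then 0 else
      if f v = 2 then 3 else 2) else f u, ?_, ?_, ?_⟩
  · intro u
    by_cases h : u = v <;> simp [h] <;> [split_ifs at * <;> omega; exact hf4 u]
  · intro u w hne h1 h2
    rw [switching_adj]
    by_cases hu : u = v <;> by_cases hw : w = v
    · exact absurd (hu.trans hw.symm) hne
    · simp only [hu, eq_self_iff_true, if_true] at hne h1 h2 ⊢
      simp only [if_pos rfl, if_neg hw] at h1 h2 ⊢
      have hfv : f v < 2 := by split_ifs at h1 <;> omega
      have := hA v w hne hfv h2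
      simp only [true_or, if_true, hne, ne_eq, not_false_iff, true_and, this, not_not]
      split_ifs at * <;> omega
    · simp only [hw, eq_self_iff_true, if_true] at hne h1 h2 ⊢
      simp only [if_pos rfl, if_neg hu] at h1 h2 ⊢
      have hfv : f v < 2 := by split_ifs at h2 <;> omega
      have := hA u v hne h1 hfv
      simp only [or_true, if_true, hne, ne_eq, not_false_iff, true_and, this, not_not]
      split_ifs at * <;> omega
    · simp only [if_neg hu, if_neg hw] at h1 h2 ⊢
      have := hA u w hne h1 h2
      simp [hu, hw, hne, this]
  · intro u w hne h1 h2
    rw [switching_adj]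
    by_cases hu : u = v <;> by_cases hw : w = v
    · exact absurd (hu.trans hw.symm) hne
    · simp only [hu, eq_self_iff_true, if_true] at hne h1 h2 ⊢
      simp only [if_pos rfl, if_neg hw] at h1 h2 ⊢
      have hfv : 2 ≤ f v := by split_ifs at h1 <;> omega
      have := hB v w hne hfv h2
      simp only [true_or, if_true, hne, ne_eq, not_false_iff, true_and, this, not_not]
      have := hf4 v
      have := hf4 w
      split_ifs at * <;> omega
    · simp only [hw, eq_self_iff_true, if_true] at hne h1 h2 ⊢
      simp only [if_pos rfl, if_neg hu] at h1 h2 ⊢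
      have hfv : 2 ≤ f v := by split_ifs at h2 <;> omega
      have := hB u v hne h1 hfv
      simp only [or_true, if_true, hne, ne_eq, not_false_iff, true_and, this, not_not]
      have := hf4 v
      have := hf4 u
      split_ifs at * <;> omega
    · simp only [if_neg hu, if_neg hw] at h1 h2 ⊢
      have := hB u w hne h1 h2
      simp [hu, hw, hne, this]
end

section
/- Let H be a 2-polar cograph that is the disjoint union of graphs H' and H'' (so every connected component of H lies entirely in H' or in H''). Then the partial complement of H with respect to this split, namely the disjoint union of the complement of H' and the complement of H'', is again a 2-polar cograph; moreover, if both H' and H'' are nonempty, the partial complement is disconnected. -/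
/-- A cograph: a graph with no induced path `P₄` on four vertices. -/
def IsCograph {V : Type*} (G : SimpleGraph V) : Prop :=
  ¬ ∃ a b c d : V, a ≠ b ∧ a ≠ c ∧ a ≠ d ∧ b ≠ c ∧ b ≠ d ∧ c ≠ d ∧
    G.Adj a b ∧ G.Adj b c ∧ G.Adj c d ∧ ¬ G.Adj a c ∧ ¬ G.Adj a d ∧ ¬ G.Adj b d

section
variable {α β : Type*} {H' : SimpleGraph α} {H'' : SimpleGraph β}

lemma pcAdj (u v : α ⊕ β) :
    (H'ᶜ ⊕g H''ᶜ).Adj u v ↔ u ≠ v ∧ ¬ (H' ⊕g H'').Adj u v ∧ u.isLeft = v.isLeft := by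
  rcases u with u | u <;> rcases v with v | v <;> simp [SimpleGraph.compl_adj]

lemma sumAdjSide {u v : α ⊕ β} (h : (H' ⊕g H'').Adj u v) : u.isLeft = v.isLeft := by
  rcases u with u | u <;> rcases v with v | v <;> simp_all

lemma pc_polar (hpol : IsSKPolar (H' ⊕g H'') 2 2) : IsSKPolar (H'ᶜ ⊕g H''ᶜ) 2 2 := by
  classical
  obtain ⟨f, hf4, hA, hB⟩ := hpol
  have hne : ∀ u v : α ⊕ β, u.isLeft ≠ v.isLeft → u ≠ v := by
    intro u v h e; exact h (by rw [e])
  have hcross : ∀ u v : α ⊕ β, u.isLeft ≠ v.isLeft → ¬ (H' ⊕g H'').Adj u v :=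
    fun u v h ha => h (sumAdjSide ha)
  have F2 : ∀ u v : α ⊕ β, u.isLeft ≠ v.isLeft → 2 ≤ f u → 2 ≤ f v → f u ≠ f v :=
    fun u v h h2 h3 e => hcross u v h ((hB u v (hne u v h) h2 h3).2 e)
  have F3 : ∀ u v : α ⊕ β, u.isLeft ≠ v.isLeft → f u < 2 → f v < 2 → f u = f v :=
    fun u v h h2 h3 => Classical.byContradiction
      fun e => hcross u v h ((hA u v (hne u v h) h2 h3).2 e)
  set PA : Prop := ∃ u v : α ⊕ β, u.isLeft ≠ v.isLeft ∧ f u < 2 ∧ f v < 2 with hPAdef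
  set PB : Prop := ∃ u v : α ⊕ β, u.isLeft ≠ v.isLeft ∧ 2 ≤ f u ∧ 2 ≤ f v with hPBdef
  set g : α ⊕ β → ℕ := fun v => if 2 ≤ f v then (if PB then 0 else f v - 2)
    else (if PA then (if v.isLeft = true then 2 else 3) else f v + 2) with hg
  have hgB : ∀ v, 2 ≤ f v → g v = if PB then 0 else f v - 2 := by
    intro v h; simp only [hg]; rw [if_pos h]
  have hgA : ∀ v, f v < 2 →
      g v = if PA then (if v.isLeft = true then 2 else 3) else f v + 2 := by
    intro v h; simp only [hg]; rw [if_neg (by omega)]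
  have hgr1 : ∀ v, 2 ≤ f v → g v < 2 := by
    intro v h; rw [hgB v h]; have := hf4 v; split_ifs <;> omega
  have hgr2 : ∀ v, f v < 2 → 2 ≤ g v ∧ g v < 4 := by
    intro v h; rw [hgA v h]; split_ifs <;> omega
  refine ⟨g, ?_, ?_, ?_⟩
  · intro v
    by_cases h : 2 ≤ f v
    · have := hgr1 v h; omega
    · have := hgr2 v (by omega); omega
  · -- new "A" side : old B vertices
    intro u v huv h1 h2
    have hu : 2 ≤ f u := by by_contra h; have := (hgr2 u (by omega)).1; omega
    have hv : 2 ≤ f v := by by_contra h; have := (hgr2 v (by omega)).1; omega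
    rw [hgB u hu, hgB v hv, pcAdj]
    have hAdj := hB u v huv hu hv
    by_cases hs : u.isLeft = v.isLeft
    · by_cases hpb : PB
      · rw [if_pos hpb, if_pos hpb]
        obtain ⟨w₁, w₂, hw, hw1, hw2⟩ := hpb
        have hw' : ∃ w : α ⊕ β, w.isLeft ≠ u.isLeft ∧ 2 ≤ f w := by
          by_cases h : w₁.isLeft = u.isLeft
          · exact ⟨w₂, by rw [← h]; exact fun e => hw e.symm, hw2⟩
          · exact ⟨w₁, h, hw1⟩
        obtain ⟨w, hwu, hfw⟩ := hw'
        have e1 : f u ≠ f w := F2 u w (fun e => hwu e.symm) hu hfw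
        have e2 : f v ≠ f w := F2 v w (fun e => hwu (e.symm.trans hs.symm)) hv hfw
        have e3 : f u = f v := by
          have := hf4 u; have := hf4 v; have := hf4 w; omega
        refine iff_of_false ?_ (by simp)
        rintro ⟨-, hna, -⟩; exact hna (hAdj.2 e3)
      · rw [if_neg hpb, if_neg hpb]
        constructor
        · rintro ⟨-, hna, -⟩
          have : f u ≠ f v := fun e => hna (hAdj.2 e)
          omega
        · intro h
          refine ⟨huv, fun ha => ?_, hs⟩
          have := hAdj.1 ha; omega
    · have hpb : PB := ⟨u, v, hs, hu, hv⟩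
      rw [if_pos hpb, if_pos hpb]
      refine iff_of_false ?_ (by simp)
      rintro ⟨-, -, h⟩; exact hs h
  · -- new "B" side : old A vertices
    intro u v huv h1 h2
    have hu : f u < 2 := by by_contra h; have := hgr1 u (by omega); omega
    have hv : f v < 2 := by by_contra h; have := hgr1 v (by omega); omega
    rw [hgA u hu, hgA v hv, pcAdj]
    have hAdj := hA u v huv hu hv
    by_cases hs : u.isLeft = v.isLeft
    · by_cases hpa : PA
      · rw [if_pos hpa, if_pos hpa]
        obtain ⟨w₁, w₂, hw, hw1, hw2⟩ := hpa
        have hw' : ∃ w : α ⊕ β, w.isLeft ≠ u.isLeft ∧ f w < 2 := by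
          by_cases h : w₁.isLeft = u.isLeft
          · exact ⟨w₂, by rw [← h]; exact fun e => hw e.symm, hw2⟩
          · exact ⟨w₁, h, hw1⟩
        obtain ⟨w, hwu, hfw⟩ := hw'
        have e1 : f u = f w := F3 u w (fun e => hwu e.symm) hu hfw
        have e2 : f v = f w := F3 v w (fun e => hwu (e.symm.trans hs.symm)) hv hfw
        exact iff_of_true ⟨huv, fun ha => (hAdj.1 ha) (e1.trans e2.symm), hs⟩ (by rw [hs])
      · rw [if_neg hpa, if_neg hpa]
        constructor
        · rintro ⟨-, hna, -⟩
          have : f u = f v := Classical.byContradiction fun e => hna (hAdj.2 e)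
          omega
        · intro h
          refine ⟨huv, fun ha => ?_, hs⟩
          have := hAdj.1 ha; omega
    · have hpa : PA := ⟨u, v, hs, hu, hv⟩
      rw [if_pos hpa, if_pos hpa]
      refine iff_of_false (by rintro ⟨-, -, h⟩; exact hs h) ?_
      cases hul : u.isLeft <;> cases hvl : v.isLeft <;>
        first
          | decide
          | exact absurd (hul.trans hvl.symm) hs

end

section
variable {α β : Type*} {H' : SimpleGraph α} {H'' : SimpleGraph β}

lemma pc_cograph (hco : IsCograph (H' ⊕g H'')) : IsCograph (H'ᶜ ⊕g H''ᶜ) := by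
  rintro ⟨a, b, c, d, hab, hac, had, hbc, hbd, hcd, Aab, Abc, Acd, nac, nad, nbd⟩
  have sab : a.isLeft = b.isLeft := ((pcAdj a b).1 Aab).2.2
  have sbc : b.isLeft = c.isLeft := ((pcAdj b c).1 Abc).2.2
  have scd : c.isLeft = d.isLeft := ((pcAdj c d).1 Acd).2.2
  have key : ∀ u v : α ⊕ β, u ≠ v → u.isLeft = v.isLeft → ¬ (H'ᶜ ⊕g H''ᶜ).Adj u v →
      (H' ⊕g H'').Adj u v := fun u v h1 h2 h3 =>
    Classical.byContradiction fun hn => h3 ((pcAdj u v).2 ⟨h1, hn, h2⟩)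
  have key2 : ∀ u v : α ⊕ β, (H'ᶜ ⊕g H''ᶜ).Adj u v → ¬ (H' ⊕g H'').Adj u v :=
    fun u v h => ((pcAdj u v).1 h).2.1
  exact hco ⟨b, d, a, c, hbd, hab.symm, hbc, had.symm, hcd.symm, hac,
    key b d hbd (sbc.trans scd) nbd,
    (key a d had (sab.trans (sbc.trans scd)) nad).symm,
    key a c hac (sab.trans sbc) nac,
    fun h => key2 a b Aab h.symm,
    fun h => key2 b c Abc h,
    fun h => key2 c d Acd h.symm⟩

lemma pc_walk_side {u v : α ⊕ β} (w : (H'ᶜ ⊕g H''ᶜ).Walk u v) : u.isLeft = v.isLeft := by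
  induction w with
  | nil => rfl
  | cons h _ ih => exact (((pcAdj _ _).1 h).2.2).trans ih

end

/-- If the disjoint union `H' ⊕g H''` is a `2`-polar cograph, then its partial complement
`H'ᶜ ⊕g H''ᶜ` is again a `2`-polar cograph; moreover, if both sides are nonempty,
the partial complement is disconnected. -/
theorem partial_complement_preserves_twoPolar_cograph
    {α β : Type*} [Fintype α] [Fintype β]
    (H' : SimpleGraph α) (H'' : SimpleGraph β)
    (hco : IsCograph (H' ⊕g H'')) (hpol : IsSKPolar (H' ⊕g H'') 2 2) :
    IsCograph (H'ᶜ ⊕g H''ᶜ) ∧ IsSKPolar (H'ᶜ ⊕g H''ᶜ) 2 2 ∧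
      (Nonempty α → Nonempty β → ¬ (H'ᶜ ⊕g H''ᶜ).Connected) := by
  refine ⟨pc_cograph hco, pc_polar hpol, ?_⟩
  rintro ⟨a⟩ ⟨b⟩ hconn
  obtain ⟨w⟩ := hconn.preconnected (Sum.inl a) (Sum.inr b)
  simpa using pc_walk_side w
end

section
/- If H is a cograph that is a minimal 2-polar obstruction, then any partial complement of H (the disjoint union of the complements of two graphs H' and H'' whose disjoint union is H, with each connected component of H lying in H' or in H'') is also a cograph that is a minimal 2-polar obstruction. -/
/-- Transfer lemma: if `P` is obtained from `G` by complementing within the fibers of a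
"side" function `σ`, where `G` and `P` have no edges across sides, then `(2,2)`-polarity of
`G` implies `(2,2)`-polarity of `P`. -/
lemma skpolar_transfer {V : Type*} (G P : SimpleGraph V) (σ : V → Bool)
    (hsame : ∀ u v, u ≠ v → σ u = σ v → (P.Adj u v ↔ ¬ G.Adj u v))
    (hdiff : ∀ u v, σ u ≠ σ v → ¬ G.Adj u v ∧ ¬ P.Adj u v)
    (h : IsSKPolar G 2 2) : IsSKPolar P 2 2 := by
  classical
  obtain ⟨f, hbd, hA, hB⟩ := h
  -- straddling predicates
  set Astr : Prop := ∃ u v : V, f u < 2 ∧ f v < 2 ∧ σ u ≠ σ v with hAdef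
  set Bstr : Prop := ∃ u v : V, 2 ≤ f u ∧ 2 ≤ f v ∧ f u ≠ f v ∧ σ u ≠ σ v with hBdef
  -- vertices in the same B-fiber lie on the same side
  have hsideB : ∀ u w, 2 ≤ f u → 2 ≤ f w → f u = f w → σ u = σ w := by
    intro u w hu hw hf
    by_cases huw : u = w
    · rw [huw]
    · by_contra hσ
      exact (hdiff u w hσ).1 ((hB u w huw hu hw).2 hf)
  refine ⟨fun v => if f v < 2 then (if Astr then 2 + (if σ v = true then 1 else 0) else f v + 2)
      else (if Bstr then 0 else f v - 2), ?_, ?_, ?_⟩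
  · intro v
    have := hbd v
    beta_reduce
    split_ifs <;> omega
  · -- the part of P with labels < 2 comes from the B-part of G
    intro u v huv h1 h2
    beta_reduce at h1 h2 ⊢
    have hu : 2 ≤ f u := by by_contra h; push_neg at h; rw [if_pos h] at h1; split_ifs at h1 <;> omega
    have hv : 2 ≤ f v := by by_contra h; push_neg at h; rw [if_pos h] at h2; split_ifs at h2 <;> omega
    simp only [if_neg (show ¬ f u < 2 by omega), if_neg (show ¬ f v < 2 by omega)]
    by_cases hBs : Bstr
    · simp only [if_pos hBs, ne_eq, not_true_eq_false, iff_false]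
      by_cases hσ : σ u = σ v
      · rw [hsame u v huv hσ]
        rw [hB u v huv hu hv]
        simp only [not_not]
        -- show f u = f v; otherwise all B-vertices lie on side σ u, contradicting Bstr
        by_contra hne
        obtain ⟨u₀, v₀, hu₀, hv₀, hne₀, hσ₀⟩ := hBs
        have key : ∀ w, 2 ≤ f w → σ w = σ u := by
          intro w hw
          have : f w = f u ∨ f w = f v := by
            have := hbd u; have := hbd v; have := hbd w; omega
          rcases this with hwu | hwv
          · exact (hsideB u w hu hw hwu.symm).symm
          · rw [(hsideB v w hv hw hwv.symm).symm, hσ]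
        exact hσ₀ (by rw [key u₀ hu₀, key v₀ hv₀])
      · exact (hdiff u v hσ).2
    · simp only [if_neg hBs]
      have harith : (f u - 2 ≠ f v - 2) ↔ f u ≠ f v := by omega
      rw [harith]
      by_cases hσ : σ u = σ v
      · rw [hsame u v huv hσ, hB u v huv hu hv]
      · refine ⟨fun hP => absurd hP (hdiff u v hσ).2, fun hne => ?_⟩
        exact (hBs ⟨u, v, hu, hv, hne, hσ⟩).elim
  · -- the part of P with labels ≥ 2 comes from the A-part of G
    intro u v huv h1 h2
    beta_reduce at h1 h2 ⊢
    have hu : f u < 2 := by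
      by_contra h; push_neg at h
      have hb := hbd u
      rw [if_neg (show ¬ f u < 2 by omega)] at h1; split_ifs at h1 <;> omega
    have hv : f v < 2 := by
      by_contra h; push_neg at h
      have hb := hbd v
      rw [if_neg (show ¬ f v < 2 by omega)] at h2; split_ifs at h2 <;> omega
    simp only [if_pos hu, if_pos hv]
    by_cases hAs : Astr
    · simp only [if_pos hAs]
      have harith : ((2 + (if σ u = true then 1 else 0) : ℕ) = 2 + (if σ v = true then 1 else 0))
          ↔ σ u = σ v := by
        rcases Bool.eq_false_or_eq_true (σ u) with h | h <;>
          rcases Bool.eq_false_or_eq_true (σ v) with h' | h' <;> simp [h, h']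
      rw [harith]
      by_cases hσ : σ u = σ v
      · rw [iff_true_intro hσ, iff_true]
        rw [hsame u v huv hσ, hA u v huv hu hv]
        simp only [not_not]
        -- show f u = f v; otherwise all A-vertices lie on side σ u, contradicting Astr
        by_contra hne
        obtain ⟨u₀, v₀, hu₀, hv₀, hσ₀⟩ := hAs
        have key : ∀ w, f w < 2 → σ w = σ u := by
          intro w hw
          by_cases hwu : f w = f u
          · have hwv : f w ≠ f v := by omega
            have hadj : G.Adj w v := by
              have hwv' : w ≠ v := by intro h; rw [h] at hwv; exact hwv rfl
              exact (hA w v hwv' hw hv).2 hwv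
            have : σ w = σ v := by
              by_contra hc; exact (hdiff w v hc).1 hadj
            rw [this, hσ]
          · have hadj : G.Adj w u := by
              have hwu' : w ≠ u := by intro h; rw [h] at hwu; exact hwu rfl
              exact (hA w u hwu' hw hu).2 hwu
            by_contra hc; exact (hdiff w u hc).1 hadj
        exact hσ₀ (by rw [key u₀ hu₀, key v₀ hv₀])
      · rw [iff_false_intro hσ, iff_false]
        exact (hdiff u v hσ).2
    · simp only [if_neg hAs]
      have hσ : σ u = σ v := by
        by_contra hc; exact hAs ⟨u, v, hu, hv, hc⟩
      have harith : f u + 2 = f v + 2 ↔ f u = f v := by omega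
      rw [harith, hsame u v huv hσ, hA u v huv hu hv]
      simp

/-- A `P₄` in a disjoint sum lies entirely in one summand. -/
lemma cograph_sum {α β : Type*} {G : SimpleGraph α} {H : SimpleGraph β}
    (h1 : IsCograph G) (h2 : IsCograph H) : IsCograph (G ⊕g H) := by
  rintro ⟨a, b, c, d, hab, hac, had, hbc, hbd, hcd, e1, e2, e3, n1, n2, n3⟩
  rcases a with a | a <;> rcases b with b | b <;> rcases c with c | c <;> rcases d with d | d <;>
    simp only [SimpleGraph.sum_adj, ne_eq, Sum.inl.injEq, Sum.inr.injEq] at * <;>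
    first
      | exact h1 ⟨a, b, c, d, hab, hac, had, hbc, hbd, hcd, e1, e2, e3, n1, n2, n3⟩
      | exact h2 ⟨a, b, c, d, hab, hac, had, hbc, hbd, hcd, e1, e2, e3, n1, n2, n3⟩

lemma cograph_sum_left {α β : Type*} {G : SimpleGraph α} {H : SimpleGraph β}
    (h : IsCograph (G ⊕g H)) : IsCograph G := by
  rintro ⟨a, b, c, d, hab, hac, had, hbc, hbd, hcd, e1, e2, e3, n1, n2, n3⟩
  exact h ⟨Sum.inl a, Sum.inl b, Sum.inl c, Sum.inl d, by simp_all, by simp_all, by simp_all,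
    by simp_all, by simp_all, by simp_all, by simpa, by simpa, by simpa, by simpa, by simpa,
    by simpa⟩

lemma cograph_sum_right {α β : Type*} {G : SimpleGraph α} {H : SimpleGraph β}
    (h : IsCograph (G ⊕g H)) : IsCograph H := by
  rintro ⟨a, b, c, d, hab, hac, had, hbc, hbd, hcd, e1, e2, e3, n1, n2, n3⟩
  exact h ⟨Sum.inr a, Sum.inr b, Sum.inr c, Sum.inr d, by simp_all, by simp_all, by simp_all,
    by simp_all, by simp_all, by simp_all, by simpa, by simpa, by simpa, by simpa, by simpa,
    by simpa⟩

/-- The complement of a `P₄` is a `P₄`. -/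
lemma cograph_compl {α : Type*} {G : SimpleGraph α} (h : IsCograph G) : IsCograph Gᶜ := by
  rintro ⟨a, b, c, d, hab, hac, had, hbc, hbd, hcd, e1, e2, e3, n1, n2, n3⟩
  simp only [SimpleGraph.compl_adj, ne_eq, not_and, not_not] at e1 e2 e3 n1 n2 n3
  exact h ⟨c, a, d, b, hac.symm, hcd, hbc.symm, had, hab, hbd.symm,
    (n1 hac).symm, n2 had, (n3 hbd).symm, e3.2, fun h' => e2.2 h'.symm, e1.2⟩

/-- If the disjoint union `H' ⊕g H''` is a cograph that is a minimal `2`-polar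
obstruction, then its partial complement `H'ᶜ ⊕g H''ᶜ` is also a cograph that is a
minimal `2`-polar obstruction. -/
theorem partial_complement_preserves_minimal_twoPolar_obstruction
    {α β : Type*} [Fintype α] [Fintype β]
    (H' : SimpleGraph α) (H'' : SimpleGraph β)
    (hco : IsCograph (H' ⊕g H''))
    (hobs : IsMinimalPolarObstruction (H' ⊕g H'') 2 2) :
    IsCograph (H'ᶜ ⊕g H''ᶜ) ∧ IsMinimalPolarObstruction (H'ᶜ ⊕g H''ᶜ) 2 2 := by
  have hsame₁ : ∀ u v : α ⊕ β, u ≠ v → u.isLeft = v.isLeft →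
      ((H' ⊕g H'').Adj u v ↔ ¬ (H'ᶜ ⊕g H''ᶜ).Adj u v) := by
    rintro (a | a) (b | b) huv hσ <;>
      simp only [SimpleGraph.sum_adj, SimpleGraph.compl_adj, ne_eq, Sum.isLeft] at *
    · have : a ≠ b := fun h => huv (by rw [h])
      tauto
    · simp at hσ
    · simp at hσ
    · have : a ≠ b := fun h => huv (by rw [h])
      tauto
  have hsame₂ : ∀ u v : α ⊕ β, u ≠ v → u.isLeft = v.isLeft →
      ((H'ᶜ ⊕g H''ᶜ).Adj u v ↔ ¬ (H' ⊕g H'').Adj u v) := by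
    intro u v huv hσ
    rw [hsame₁ u v huv hσ]
    by_cases h : (H'ᶜ ⊕g H''ᶜ).Adj u v <;> simp [h]
  have hdiff : ∀ u v : α ⊕ β, u.isLeft ≠ v.isLeft →
      ¬ (H' ⊕g H'').Adj u v ∧ ¬ (H'ᶜ ⊕g H''ᶜ).Adj u v := by
    rintro (a | a) (b | b) hσ <;> simp_all [Sum.isLeft]
  refine ⟨cograph_sum (cograph_compl (cograph_sum_left hco))
      (cograph_compl (cograph_sum_right hco)), ?_, ?_⟩
  · -- not polar
    intro hpol
    exact hobs.1 (skpolar_transfer (H'ᶜ ⊕g H''ᶜ) (H' ⊕g H'') Sum.isLeft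
      (fun u v huv hσ => hsame₁ u v huv hσ) (fun u v hσ => ⟨(hdiff u v hσ).2, (hdiff u v hσ).1⟩)
      hpol)
  · -- minimality
    intro S hS
    refine skpolar_transfer ((H' ⊕g H'').induce S) ((H'ᶜ ⊕g H''ᶜ).induce S)
      (fun v => (v : α ⊕ β).isLeft) ?_ ?_ (hobs.2 S hS)
    · intro u v huv hσ
      have hval : (u : α ⊕ β) ≠ (v : α ⊕ β) := fun h => huv (Subtype.ext h)
      exact hsame₂ (u : α ⊕ β) (v : α ⊕ β) hval hσ
    · intro u v hσ
      exact hdiff (u : α ⊕ β) (v : α ⊕ β) hσ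
end

section
/- For every integer k ≥ 2, the graph K_1 + (k+1)K_2 (the disjoint union of one isolated vertex and k+1 copies of K_2) is a cograph and a minimal k-polar obstruction. -/
/-- `mK m n` is the disjoint union of `m` copies of the complete graph `K_n`. -/
def mK (m n : ℕ) : SimpleGraph (Fin m × Fin n) :=
  SimpleGraph.fromRel (fun a b => a.1 = b.1)

lemma gg_adj_inr {k : ℕ} (i j : Fin (k+1)) (a b : Fin 2) :
    ((⊥ : SimpleGraph (Fin 1)) ⊕g mK (k + 1) 2).Adj (Sum.inr (i,a)) (Sum.inr (j,b)) ↔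
      i = j ∧ a ≠ b := by
  simp only [SimpleGraph.sum_adj, mK, SimpleGraph.fromRel_adj]
  constructor
  · rintro ⟨hne, h | h⟩
    · obtain rfl : i = j := h
      exact ⟨rfl, fun hab => hne (by rw [hab])⟩
    · obtain rfl : j = i := h
      exact ⟨rfl, fun hab => hne (by rw [hab])⟩
  · rintro ⟨rfl, hab⟩
    exact ⟨by simp [hab], Or.inl rfl⟩

lemma gg_not_adj_inl {k : ℕ} (x : Fin 1) (v : Fin 1 ⊕ Fin (k+1) × Fin 2) :
    ¬ ((⊥ : SimpleGraph (Fin 1)) ⊕g mK (k + 1) 2).Adj (Sum.inl x) v := by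
  cases v <;> simp [SimpleGraph.sum_adj]


/-- component map -/
def ggcomp {k : ℕ} : (Fin 1 ⊕ Fin (k+1) × Fin 2) → Option (Fin (k+1))
  | Sum.inl _ => none
  | Sum.inr p => some p.1

lemma gg_adj_comp {k : ℕ} {u v : Fin 1 ⊕ Fin (k+1) × Fin 2}
    (h : ((⊥ : SimpleGraph (Fin 1)) ⊕g mK (k + 1) 2).Adj u v) : ggcomp u = ggcomp v := by
  cases u with
  | inl x => exact absurd h (gg_not_adj_inl x v)
  | inr p =>
    cases v with
    | inl y => exact absurd h.symm (gg_not_adj_inl y _)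
    | inr q =>
      obtain ⟨i, a⟩ := p; obtain ⟨j, b⟩ := q
      obtain ⟨rfl, -⟩ := (gg_adj_inr i j a b).mp h
      rfl

lemma gg_not_polar {k : ℕ} (hk : 2 ≤ k) :
    ¬ IsSKPolar ((⊥ : SimpleGraph (Fin 1)) ⊕g mK (k + 1) 2) k k := by
  classical
  rintro ⟨f, hbound, hA, hB⟩
  set G := (⊥ : SimpleGraph (Fin 1)) ⊕g mK (k + 1) 2 with hG
  set P : Option (Fin (k+1)) → Prop := fun c => ∃ v, ggcomp v = c ∧ k ≤ f v with hP
  -- a component that is not P is entirely below k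
  have hlow : ∀ c, ¬ P c → ∀ v, ggcomp v = c → f v < k := by
    intro c hc v hv
    by_contra h
    exact hc ⟨v, hv, le_of_not_gt h⟩
  -- no two distinct components can both be fully low
  have hmix : ∀ (j : Fin (k+1)), ¬ P none → ¬ P (some j) → False := by
    intro j h1 h2
    have e0 : f (Sum.inl (0 : Fin 1)) = f (Sum.inr (j, 0)) := by
      have := hA (Sum.inl 0) (Sum.inr (j, 0)) (by simp)
        (hlow _ h1 _ rfl) (hlow _ h2 _ rfl)
      by_contra hne
      exact gg_not_adj_inl _ _ (this.mpr hne)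
    have e1 : f (Sum.inl (0 : Fin 1)) = f (Sum.inr (j, 1)) := by
      have := hA (Sum.inl 0) (Sum.inr (j, 1)) (by simp)
        (hlow _ h1 _ rfl) (hlow _ h2 _ rfl)
      by_contra hne
      exact gg_not_adj_inl _ _ (this.mpr hne)
    have hadj : G.Adj (Sum.inr (j, 0)) (Sum.inr (j, 1)) :=
      (gg_adj_inr j j 0 1).mpr ⟨rfl, by decide⟩
    have := (hA (Sum.inr (j, 0)) (Sum.inr (j, 1)) (by simp)
      (hlow _ h2 _ rfl) (hlow _ h2 _ rfl)).mp hadj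
    omega
  have hsame : ∀ (i j : Fin (k+1)), i ≠ j → ¬ P (some i) → ¬ P (some j) → False := by
    intro i j hij h1 h2
    have e0 : f (Sum.inr (i, 0)) = f (Sum.inr (j, 0)) := by
      have := hA (Sum.inr (i, 0)) (Sum.inr (j, 0)) (by simp [hij])
        (hlow _ h1 _ rfl) (hlow _ h2 _ rfl)
      by_contra hne
      exact hij ((gg_adj_inr i j 0 0).mp (this.mpr hne)).1
    have e1 : f (Sum.inr (i, 0)) = f (Sum.inr (j, 1)) := by
      have := hA (Sum.inr (i, 0)) (Sum.inr (j, 1)) (by simp [hij])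
        (hlow _ h1 _ rfl) (hlow _ h2 _ rfl)
      by_contra hne
      exact hij ((gg_adj_inr i j 0 1).mp (this.mpr hne)).1
    have hadj : G.Adj (Sum.inr (j, 0)) (Sum.inr (j, 1)) :=
      (gg_adj_inr j j 0 1).mpr ⟨rfl, by decide⟩
    have := (hA (Sum.inr (j, 0)) (Sum.inr (j, 1)) (by simp)
      (hlow _ h2 _ rfl) (hlow _ h2 _ rfl)).mp hadj
    omega
  have hfull : ∀ c₁ c₂ : Option (Fin (k+1)), c₁ ≠ c₂ → ¬ P c₁ → ¬ P c₂ → False := by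
    rintro (_ | i) (_ | j) hne h1 h2
    · exact hne rfl
    · exact hmix j h1 h2
    · exact hmix i h2 h1
    · exact hsame i j (by simpa using hne) h1 h2
  -- so the set of non-P components has at most one element
  have hcard1 : (Finset.univ.filter fun c : Option (Fin (k+1)) => ¬ P c).card ≤ 1 := by
    refine Finset.card_le_one.mpr fun a ha b hb => ?_
    by_contra hne
    exact hfull a b hne (Finset.mem_filter.mp ha).2 (Finset.mem_filter.mp hb).2
  have hcardP : k + 1 ≤ (Finset.univ.filter P).card := by
    have := Finset.card_filter_add_card_filter_not
      (s := (Finset.univ : Finset (Option (Fin (k+1))))) (p := P)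
    have hu : (Finset.univ : Finset (Option (Fin (k+1)))).card = k + 2 := by
      simp [Fintype.card_option]
    omega
  -- witness function
  set w : Option (Fin (k+1)) → (Fin 1 ⊕ Fin (k+1) × Fin 2) :=
    fun c => if h : P c then h.choose else Sum.inl 0 with hw
  have hwspec : ∀ c, P c → ggcomp (w c) = c ∧ k ≤ f (w c) := by
    intro c hc
    simp only [hw, dif_pos hc]
    exact hc.choose_spec
  have hinj : Set.InjOn (fun c => f (w c))
      ↑(Finset.univ.filter P) := by
    intro c₁ h₁ c₂ h₂ heq
    have p₁ := (Finset.mem_filter.mp (by exact_mod_cast h₁)).2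
    have p₂ := (Finset.mem_filter.mp (by exact_mod_cast h₂)).2
    by_contra hne
    have hwne : w c₁ ≠ w c₂ := fun h => hne (by
      rw [← (hwspec c₁ p₁).1, ← (hwspec c₂ p₂).1, h])
    have := (hB _ _ hwne (hwspec c₁ p₁).2 (hwspec c₂ p₂).2).mpr heq
    have := gg_adj_comp this
    rw [(hwspec c₁ p₁).1, (hwspec c₂ p₂).1] at this
    exact hne this
  have hmaps : ∀ c ∈ (Finset.univ.filter P),
      f (w c) ∈ Finset.Ico k (k + k) := by
    intro c hc
    have pc := (Finset.mem_filter.mp hc).2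
    exact Finset.mem_Ico.mpr ⟨(hwspec c pc).2, hbound _⟩
  have := Finset.card_le_card_of_injOn _ hmaps hinj
  rw [Nat.card_Ico] at this
  omega

lemma gg_polar_del {k : ℕ} (hk : 2 ≤ k) (S : Set (Fin 1 ⊕ Fin (k+1) × Fin 2))
    (hS : S ≠ Set.univ) :
    IsSKPolar (((⊥ : SimpleGraph (Fin 1)) ⊕g mK (k + 1) 2).induce S) k k := by
  classical
  obtain ⟨v₀, hv₀⟩ := (Set.ne_univ_iff_exists_notMem S).mp hS
  have hinduce : ∀ u v : ↥S,
      ((((⊥ : SimpleGraph (Fin 1)) ⊕g mK (k + 1) 2)).induce S).Adj u v ↔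
        (((⊥ : SimpleGraph (Fin 1)) ⊕g mK (k + 1) 2)).Adj ↑u ↑v := by
    intro u v; simp [SimpleGraph.comap_adj]
  rcases v₀ with x | ⟨i₀, a₀⟩
  · -- the isolated vertex is missing
    have hninl : ∀ (y : Fin 1), (Sum.inl y : Fin 1 ⊕ Fin (k+1) × Fin 2) ∉ S := by
      intro y
      have : y = x := Subsingleton.elim _ _
      rw [this]; exact hv₀
    set g : (Fin 1 ⊕ Fin (k+1) × Fin 2) → ℕ :=
      Sum.elim (fun _ => 0)
        (fun p => if p.1.val = 0 then (p.2 : ℕ) else k + (p.1.val - 1)) with hg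
    refine ⟨fun u => g ↑u, ?_, ?_, ?_⟩
    · rintro ⟨(y | ⟨i, a⟩), hu⟩
      · simpa [hg] using by omega
      · simp only [hg, Sum.elim_inr]
        have := a.isLt; have := i.isLt
        split_ifs <;> omega
    · rintro ⟨(y | ⟨i, a⟩), hu⟩
      · exact absurd hu (hninl y)
      · rintro ⟨(y | ⟨j, b⟩), hv⟩
        · exact absurd hv (hninl y)
        · intro huv h1 h2
          simp only [hg, Sum.elim_inr] at h1 h2 ⊢
          have hij : (i, a) ≠ (j, b) := by
            intro h; exact huv (Subtype.ext (by simp [h]))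
          have hi0 : i.val = 0 := by by_contra h; rw [if_neg h] at h1; omega
          have hj0 : j.val = 0 := by by_contra h; rw [if_neg h] at h2; omega
          have hij' : i = j := Fin.ext (by omega)
          subst hij'
          have hab : a ≠ b := fun h => hij (by rw [h])
          rw [hinduce, gg_adj_inr]
          simp only [if_pos hi0]
          constructor
          · rintro ⟨-, h⟩; exact Fin.val_ne_of_ne h
          · intro h; exact ⟨by trivial, Fin.ne_of_val_ne h⟩
    · rintro ⟨(y | ⟨i, a⟩), hu⟩
      · exact absurd hu (hninl y)
      · rintro ⟨(y | ⟨j, b⟩), hv⟩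
        · exact absurd hv (hninl y)
        · intro huv h1 h2
          simp only [hg, Sum.elim_inr] at h1 h2 ⊢
          have hij : (i, a) ≠ (j, b) := by
            intro h; exact huv (Subtype.ext (by simp [h]))
          have hi0 : i.val ≠ 0 := by
            intro h; rw [if_pos h] at h1; have := a.isLt; omega
          have hj0 : j.val ≠ 0 := by
            intro h; rw [if_pos h] at h2; have := b.isLt; omega
          rw [hinduce, gg_adj_inr]
          simp only [if_neg hi0, if_neg hj0]
          constructor
          · rintro ⟨rfl, -⟩; rfl
          · intro h
            have : i = j := Fin.ext (by omega)
            subst this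
            exact ⟨rfl, fun h' => hij (by rw [h'])⟩
  · -- an edge vertex (i₀, a₀) is missing
    set g : (Fin 1 ⊕ Fin (k+1) × Fin 2) → ℕ :=
      Sum.elim (fun _ => 0)
        (fun p => if p.1 = i₀ then 0
          else k + (if p.1.val < i₀.val then p.1.val else p.1.val - 1)) with hg
    have hglt : ∀ p : Fin (k+1) × Fin 2, p.1 ≠ i₀ → g (Sum.inr p) =
        k + (if p.1.val < i₀.val then p.1.val else p.1.val - 1) := by
      intro p hp; simp [hg, hp]
    refine ⟨fun u => g ↑u, ?_, ?_, ?_⟩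
    · rintro ⟨(y | ⟨i, a⟩), hu⟩
      · simpa [hg] using by omega
      · simp only [hg, Sum.elim_inr]
        have := i.isLt; have := i₀.isLt
        split_ifs <;> omega
    · rintro ⟨(y | ⟨i, a⟩), hu⟩ <;> rintro ⟨(z | ⟨j, b⟩), hv⟩ <;> intro huv h1 h2
      · exact absurd (Subtype.ext (congrArg Sum.inl (Subsingleton.elim y z))) huv
      · -- inl vs inr : both values must be 0, need j = i₀
        simp only [hg, Sum.elim_inl, Sum.elim_inr] at h1 h2 ⊢
        rw [hinduce]
        have hj : j = i₀ := by by_contra h; rw [if_neg h] at h2; omega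
        simp only [if_pos hj]
        constructor
        · intro h; exact absurd h (gg_not_adj_inl _ _)
        · omega
      · simp only [hg, Sum.elim_inl, Sum.elim_inr] at h1 h2 ⊢
        rw [hinduce]
        have hi : i = i₀ := by by_contra h; rw [if_neg h] at h1; omega
        simp only [if_pos hi]
        constructor
        · intro h; exact absurd h.symm (gg_not_adj_inl _ _)
        · omega
      · -- inr vs inr, both low: both in component i₀, impossible distinct
        simp only [hg, Sum.elim_inr] at h1 h2
        have hi : i = i₀ := by by_contra h; rw [if_neg h] at h1; omega
        have hj : j = i₀ := by by_contra h; rw [if_neg h] at h2; omega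
        subst hi; subst hj
        have ha : a ≠ a₀ := by rintro rfl; exact hv₀ hu
        have hb : b ≠ a₀ := by rintro rfl; exact hv₀ hv
        have hab : a = b := by
          have := a.isLt; have := b.isLt; have := a₀.isLt
          have h1 := Fin.val_ne_of_ne ha
          have h2 := Fin.val_ne_of_ne hb
          exact Fin.ext (by omega)
        exact absurd (Subtype.ext (by simp [hab])) huv
    · rintro ⟨(y | ⟨i, a⟩), hu⟩ <;> rintro ⟨(z | ⟨j, b⟩), hv⟩ <;> intro huv h1 h2
      · simp [hg] at h1; omega
      · simp [hg] at h1; omega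
      · simp [hg] at h2; omega
      · simp only [hg, Sum.elim_inr] at h1 h2 ⊢
        have hi : i ≠ i₀ := by intro h; rw [if_pos h] at h1; omega
        have hj : j ≠ i₀ := by intro h; rw [if_pos h] at h2; omega
        have hij : (i, a) ≠ (j, b) := by
          intro h; exact huv (Subtype.ext (by simp [h]))
        rw [hinduce, gg_adj_inr]
        simp only [if_neg hi, if_neg hj]
        have hi' := Fin.val_ne_of_ne hi
        have hj' := Fin.val_ne_of_ne hj
        constructor
        · rintro ⟨rfl, -⟩; rfl
        · intro h
          have : i = j := by
            refine Fin.ext ?_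
            split_ifs at h <;> omega
          subst this
          exact ⟨rfl, fun h' => hij (by rw [h'])⟩

lemma gg_adj_dest {k : ℕ} {u v : Fin 1 ⊕ Fin (k+1) × Fin 2}
    (h : ((⊥ : SimpleGraph (Fin 1)) ⊕g mK (k + 1) 2).Adj u v) :
    ∃ (i : Fin (k+1)) (x y : Fin 2), x ≠ y ∧ u = Sum.inr (i, x) ∧ v = Sum.inr (i, y) := by
  cases u with
  | inl x => exact absurd h (gg_not_adj_inl x v)
  | inr p =>
    cases v with
    | inl y => exact absurd h.symm (gg_not_adj_inl y _)
    | inr q =>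
      obtain ⟨i, a⟩ := p; obtain ⟨j, b⟩ := q
      obtain ⟨rfl, hab⟩ := (gg_adj_inr i j a b).mp h
      exact ⟨i, a, b, hab, rfl, rfl⟩

/-- For every `k ≥ 2`, the graph `K₁ + (k+1)K₂` is a cograph and a minimal `k`-polar
obstruction. -/
theorem K1_plus_kplus1_K2_is_minimal_obstruction {k : ℕ} (hk : 2 ≤ k) :
    IsCograph ((⊥ : SimpleGraph (Fin 1)) ⊕g mK (k + 1) 2) ∧
      IsMinimalPolarObstruction ((⊥ : SimpleGraph (Fin 1)) ⊕g mK (k + 1) 2) k k := by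
  refine ⟨?_, gg_not_polar hk, fun S hS => gg_polar_del hk S hS⟩
  rintro ⟨a, b, c, d, hab, hac, had, hbc, hbd, hcd, Hab, Hbc, Hcd, nac, nad, nbd⟩
  obtain ⟨i, x, y, hxy, rfl, rfl⟩ := gg_adj_dest Hab
  obtain ⟨j, x', z, hxz, hb, rfl⟩ := gg_adj_dest Hbc
  obtain ⟨rfl, rfl⟩ : i = j ∧ y = x' := by
    have h1 := congrArg (fun w => match w with | Sum.inr p => p.1 | Sum.inl _ => j) hb
    have h2 := congrArg (fun w => match w with | Sum.inr p => p.2 | Sum.inl _ => x') hb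
    exact ⟨h1, h2⟩
  have hx := Fin.val_ne_of_ne hxy
  have hz := Fin.val_ne_of_ne hxz
  have : x = z := by
    have := x.isLt; have := y.isLt; have := z.isLt
    exact Fin.ext (by omega)
  exact hac (by rw [this])
end

section
/- For every integer k ≥ 2, the graph K_{k+1,k+1} + (k+1)K_1, the disjoint union of the complete bipartite graph with both parts of size k+1 and k+1 isolated vertices, is a cograph and a minimal k-polar obstruction. -/
/-- No injective map from `Fin (k+1)` into `[k, 2k)`. -/
lemma no_inj_aux (k : ℕ) (g : Fin (k + 1) → ℕ) (hlo : ∀ i, k ≤ g i)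
    (hhi : ∀ i, g i < k + k) (hinj : ∀ i j, i ≠ j → g i ≠ g j) : False := by
  have hinj' : Function.Injective
      (fun i : Fin (k + 1) => (⟨g i - k, by have := hlo i; have := hhi i; omega⟩ : Fin k)) := by
    intro i j h
    by_contra hne
    apply hinj i j hne
    have := hlo i; have := hlo j
    simp only [Fin.mk.injEq] at h
    omega
  have := Fintype.card_le_of_injective _ hinj'
  simp at this

/-- Assignment putting side `L` (minus `i0`) into the clique part. -/
def fSideL (k : ℕ) (i0 : Fin (k + 1)) : (Fin (k + 1) ⊕ Fin (k + 1)) ⊕ Fin (k + 1) → ℕ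
  | .inl (.inl i) => k + (if i.val < i0.val then i.val else i.val - 1)
  | _ => 0

/-- Assignment putting side `R` (minus `j0`) into the clique part. -/
def fSideR (k : ℕ) (j0 : Fin (k + 1)) : (Fin (k + 1) ⊕ Fin (k + 1)) ⊕ Fin (k + 1) → ℕ
  | .inl (.inr j) => k + (if j.val < j0.val then j.val else j.val - 1)
  | _ => 0

/-- Assignment putting the isolated vertices (minus `j0`) into the clique part. -/
def fIso (k : ℕ) (j0 : Fin (k + 1)) : (Fin (k + 1) ⊕ Fin (k + 1)) ⊕ Fin (k + 1) → ℕ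
  | .inl (.inl _) => 0
  | .inl (.inr _) => 1
  | .inr j => k + (if j.val < j0.val then j.val else j.val - 1)

lemma polar_missL {k : ℕ} (hk : 2 ≤ k) (S : Set ((Fin (k+1) ⊕ Fin (k+1)) ⊕ Fin (k+1)))
    (i0 : Fin (k+1)) (hv0 : Sum.inl (Sum.inl i0) ∉ S) :
    IsSKPolar ((completeBipartiteGraph (Fin (k + 1)) (Fin (k + 1)) ⊕g
      (⊥ : SimpleGraph (Fin (k + 1)))).induce S) k k := by
  have hne0 : ∀ i : Fin (k+1), Sum.inl (Sum.inl i) ∈ S → i.val ≠ i0.val := by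
    intro i hi h
    exact hv0 (by rwa [← Fin.ext h])
  refine ⟨fun v => fSideL k i0 v.val, ?_, ?_, ?_⟩
  · rintro ⟨(v | v) | v, hv⟩ <;> simp only [fSideL] <;> [skip; omega; omega]
    have := hne0 v hv
    have := v.isLt
    split <;> omega
  · rintro ⟨(u | u) | u, hu⟩ ⟨(v | v) | v, hv⟩ hne hfu hfv <;>
      simp only [fSideL] at hfu hfv ⊢ <;>
      simp [SimpleGraph.comap_adj, SimpleGraph.sum_adj, completeBipartiteGraph] <;> omega
  · rintro ⟨(u | u) | u, hu⟩ ⟨(v | v) | v, hv⟩ hne hfu hfv <;>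
      simp only [fSideL] at hfu hfv ⊢ <;>
      simp [SimpleGraph.comap_adj, SimpleGraph.sum_adj, completeBipartiteGraph] <;>
      try omega
    have huv : u ≠ v := by rintro rfl; exact hne rfl
    have h1 := hne0 u hu
    have h2 := hne0 v hv
    have h3 : u.val ≠ v.val := fun h => huv (Fin.ext h)
    have := u.isLt; have := v.isLt
    split_ifs <;> omega


lemma polar_missR {k : ℕ} (hk : 2 ≤ k) (S : Set ((Fin (k+1) ⊕ Fin (k+1)) ⊕ Fin (k+1)))
    (j0 : Fin (k+1)) (hv0 : Sum.inl (Sum.inr j0) ∉ S) :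
    IsSKPolar ((completeBipartiteGraph (Fin (k + 1)) (Fin (k + 1)) ⊕g
      (⊥ : SimpleGraph (Fin (k + 1)))).induce S) k k := by
  have hne0 : ∀ j : Fin (k+1), Sum.inl (Sum.inr j) ∈ S → j.val ≠ j0.val := by
    intro j hj h
    exact hv0 (by rwa [← Fin.ext h])
  refine ⟨fun v => fSideR k j0 v.val, ?_, ?_, ?_⟩
  · rintro ⟨(v | v) | v, hv⟩ <;> simp only [fSideR] <;> [omega; skip; omega]
    have := hne0 v hv
    have := v.isLt
    split <;> omega
  · rintro ⟨(u | u) | u, hu⟩ ⟨(v | v) | v, hv⟩ hne hfu hfv <;>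
      simp only [fSideR] at hfu hfv ⊢ <;>
      simp [SimpleGraph.comap_adj, SimpleGraph.sum_adj, completeBipartiteGraph] <;> omega
  · rintro ⟨(u | u) | u, hu⟩ ⟨(v | v) | v, hv⟩ hne hfu hfv <;>
      simp only [fSideR] at hfu hfv ⊢ <;>
      simp [SimpleGraph.comap_adj, SimpleGraph.sum_adj, completeBipartiteGraph] <;>
      try omega
    have huv : u ≠ v := by rintro rfl; exact hne rfl
    have h1 := hne0 u hu
    have h2 := hne0 v hv
    have h3 : u.val ≠ v.val := fun h => huv (Fin.ext h)
    have := u.isLt; have := v.isLt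
    split_ifs <;> omega

lemma polar_missI {k : ℕ} (hk : 2 ≤ k) (S : Set ((Fin (k+1) ⊕ Fin (k+1)) ⊕ Fin (k+1)))
    (j0 : Fin (k+1)) (hv0 : Sum.inr j0 ∉ S) :
    IsSKPolar ((completeBipartiteGraph (Fin (k + 1)) (Fin (k + 1)) ⊕g
      (⊥ : SimpleGraph (Fin (k + 1)))).induce S) k k := by
  have hne0 : ∀ j : Fin (k+1), Sum.inr j ∈ S → j.val ≠ j0.val := by
    intro j hj h
    exact hv0 (by rwa [← Fin.ext h])
  refine ⟨fun v => fIso k j0 v.val, ?_, ?_, ?_⟩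
  · rintro ⟨(v | v) | v, hv⟩ <;> simp only [fIso] <;> [omega; omega; skip]
    have := hne0 v hv
    have := v.isLt
    split <;> omega
  · rintro ⟨(u | u) | u, hu⟩ ⟨(v | v) | v, hv⟩ hne hfu hfv <;>
      simp only [fIso] at hfu hfv ⊢ <;>
      simp [SimpleGraph.comap_adj, SimpleGraph.sum_adj, completeBipartiteGraph] <;> omega
  · rintro ⟨(u | u) | u, hu⟩ ⟨(v | v) | v, hv⟩ hne hfu hfv <;>
      simp only [fIso] at hfu hfv ⊢ <;>
      simp [SimpleGraph.comap_adj, SimpleGraph.sum_adj, completeBipartiteGraph] <;>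
      try omega
    have huv : u ≠ v := by rintro rfl; exact hne rfl
    have h1 := hne0 u hu
    have h2 := hne0 v hv
    have h3 : u.val ≠ v.val := fun h => huv (Fin.ext h)
    have := u.isLt; have := v.isLt
    split_ifs <;> omega

/-- For every `k ≥ 2`, the graph `K_{k+1,k+1} + (k+1)K₁` is a cograph and a minimal
`k`-polar obstruction. -/
theorem completeBipartite_plus_isolated_is_minimal_obstruction {k : ℕ} (hk : 2 ≤ k) :
    IsCograph (completeBipartiteGraph (Fin (k + 1)) (Fin (k + 1)) ⊕g
        (⊥ : SimpleGraph (Fin (k + 1)))) ∧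
      IsMinimalPolarObstruction (completeBipartiteGraph (Fin (k + 1)) (Fin (k + 1)) ⊕g
        (⊥ : SimpleGraph (Fin (k + 1)))) k k := by
  constructor
  · rintro ⟨a, b, c, d, hab, hac, had, hbc, hbd, hcd, Aab, Abc, Acd, Nac, Nad, Nbd⟩
    rcases a with (a | a) | a <;> rcases b with (b | b) | b <;> rcases c with (c | c) | c <;>
      rcases d with (d | d) | d <;>
      simp_all [SimpleGraph.sum_adj, completeBipartiteGraph]
  constructor
  · rintro ⟨f, h1, h2, h3⟩
    have hIso : ∃ j : Fin (k + 1), f (Sum.inr j) < k := by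
      by_contra h
      push_neg at h
      refine no_inj_aux k (fun j => f (Sum.inr j)) h (fun j => h1 _) (fun i j hij heq => ?_)
      have hadj := (h3 (Sum.inr i) (Sum.inr j) (by simpa using hij) (h i) (h j)).mpr heq
      simp [SimpleGraph.sum_adj] at hadj
    obtain ⟨j0, hj0⟩ := hIso
    have hsame : ∀ u, u ≠ Sum.inr j0 → f u < k → f u = f (Sum.inr j0) := by
      intro u hu hfu
      by_contra hne
      have hadj := (h2 u _ hu hfu hj0).mpr hne
      rcases u with (u | u) | u <;>
        simp [SimpleGraph.sum_adj, completeBipartiteGraph] at hadj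
    have hside : (∀ i : Fin (k+1), k ≤ f (Sum.inl (Sum.inl i))) ∨
        (∀ j : Fin (k+1), k ≤ f (Sum.inl (Sum.inr j))) := by
      by_contra h
      push_neg at h
      obtain ⟨⟨i, hi⟩, ⟨j, hj⟩⟩ := h
      have e1 := hsame (Sum.inl (Sum.inl i)) (by simp) hi
      have e2 := hsame (Sum.inl (Sum.inr j)) (by simp) hj
      have hadj : (completeBipartiteGraph (Fin (k + 1)) (Fin (k + 1)) ⊕g
          (⊥ : SimpleGraph (Fin (k + 1)))).Adj (Sum.inl (Sum.inl i)) (Sum.inl (Sum.inr j)) := by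
        simp [SimpleGraph.sum_adj, completeBipartiteGraph]
      exact (h2 _ _ (by simp) hi hj).mp hadj (e1.trans e2.symm)
    rcases hside with h | h
    · refine no_inj_aux k (fun i => f (Sum.inl (Sum.inl i))) h (fun i => h1 _)
        (fun i j hij heq => ?_)
      have hadj := (h3 _ _ (by simpa using hij) (h i) (h j)).mpr heq
      simp [SimpleGraph.sum_adj, completeBipartiteGraph] at hadj
    · refine no_inj_aux k (fun j => f (Sum.inl (Sum.inr j))) h (fun j => h1 _)
        (fun i j hij heq => ?_)
      have hadj := (h3 _ _ (by simpa using hij) (h i) (h j)).mpr heq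
      simp [SimpleGraph.sum_adj, completeBipartiteGraph] at hadj
  · intro S hS
    obtain ⟨v0, hv0⟩ := (Set.ne_univ_iff_exists_notMem S).mp hS
    rcases v0 with (i0 | j0) | j0
    exacts [polar_missL hk S i0 hv0, polar_missR hk S j0 hv0, polar_missI hk S j0 hv0]
end

section
/- For every integer k ≥ 2, the graph (k+1)K_{k+1}, the disjoint union of k+1 copies of the complete graph on k+1 vertices, is a cograph and a minimal k-polar obstruction (with exactly (k+1)^2 vertices, hence extremal). -/
lemma mK_adj {m n : ℕ} {a b : Fin m × Fin n} :
    (mK m n).Adj a b ↔ a ≠ b ∧ a.1 = b.1 := by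
  simp only [mK, SimpleGraph.fromRel_adj]
  constructor
  · rintro ⟨h1, h2 | h2⟩
    · exact ⟨h1, h2⟩
    · exact ⟨h1, h2.symm⟩
  · rintro ⟨h1, h2⟩
    exact ⟨h1, Or.inl h2⟩

/-- For every `k ≥ 2`, the graph `(k+1)K_{k+1}` is a cograph and a minimal `k`-polar
obstruction, with exactly `(k+1)^2` vertices (hence it is extremal). -/
theorem kplus1_copies_of_Kkplus1_is_extremal_minimal_obstruction {k : ℕ} (hk : 2 ≤ k) :
    IsCograph (mK (k + 1) (k + 1)) ∧
      IsMinimalPolarObstruction (mK (k + 1) (k + 1)) k k ∧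
      Fintype.card (Fin (k + 1) × Fin (k + 1)) = (k + 1) ^ 2 := by
  have hk1 : 1 ≤ k := by omega
  refine ⟨?_, ⟨?_, ?_⟩, ?_⟩
  · -- cograph
    rintro ⟨a, b, c, d, hab, hac, had, hbc, hbd, hcd, Aab, Abc, Acd, Nac, Nad, Nbd⟩
    rw [mK_adj] at Aab Abc
    exact Nac (mK_adj.2 ⟨hac, Aab.2.trans Abc.2⟩)
  · -- not (k,k)-polar
    rintro ⟨f, hlt, hA, hB⟩
    by_cases h : ∀ i : Fin (k + 1), ∃ j : Fin (k + 1), k ≤ f (i, j)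
    · choose j hj using h
      have hinj : Function.Injective (fun i : Fin (k + 1) => f (i, j i)) := by
        intro i i' hf
        by_contra hne
        have hne' : (i, j i) ≠ (i', j i') := fun h => hne (congrArg Prod.fst h)
        have hadj := (hB _ _ hne' (hj i) (hj i')).2 hf
        rw [mK_adj] at hadj
        exact hne hadj.2
      have hcard := Finset.card_le_card_of_injOn (s := (Finset.univ : Finset (Fin (k+1)))) (fun i : Fin (k + 1) => f (i, j i))
        (fun i _ => Finset.mem_Ico.2 ⟨hj i, hlt _⟩) hinj.injOn
      simp only [Finset.card_univ, Fintype.card_fin, Nat.card_Ico] at hcard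
      omega
    · push_neg at h
      obtain ⟨i, hi⟩ := h
      have hinj : Function.Injective (fun j : Fin (k + 1) => f (i, j)) := by
        intro j j' hf
        by_contra hne
        have hne' : ((i, j) : Fin (k + 1) × Fin (k + 1)) ≠ (i, j') :=
          fun h => hne (congrArg Prod.snd h)
        have hadj : (mK (k + 1) (k + 1)).Adj (i, j) (i, j') := mK_adj.2 ⟨hne', rfl⟩
        exact (hA _ _ hne' (hi j) (hi j')).1 hadj hf
      have hcard := Finset.card_le_card_of_injOn (s := (Finset.univ : Finset (Fin (k+1)))) (fun j : Fin (k + 1) => f (i, j))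
        (fun j _ => Finset.mem_range.2 (hi j)) hinj.injOn
      simp only [Finset.card_univ, Fintype.card_fin, Finset.card_range] at hcard
      omega
  · -- minimality
    intro S hS
    have hex : ∃ v : Fin (k + 1) × Fin (k + 1), v ∉ S := by
      by_contra h
      push_neg at h
      exact hS (Set.eq_univ_of_forall h)
    obtain ⟨⟨a, b⟩, hab⟩ := hex
    have hne_b : ∀ v : S, (v : Fin (k + 1) × Fin (k + 1)).1 = a →
        ((v : Fin (k + 1) × Fin (k + 1)).2 : ℕ) ≠ (b : ℕ) := by
      rintro ⟨⟨v1, v2⟩, hv⟩ h1 h2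
      apply hab
      have : v2 = b := Fin.val_injective h2
      simp only at h1
      rw [← h1, ← this]
      exact hv
    refine ⟨fun v => if (v : Fin (k + 1) × Fin (k + 1)).1 = a then
        (if ((v : Fin (k + 1) × Fin (k + 1)).2 : ℕ) < (b : ℕ) then
          ((v : Fin (k + 1) × Fin (k + 1)).2 : ℕ)
        else ((v : Fin (k + 1) × Fin (k + 1)).2 : ℕ) - 1)
      else k + (if ((v : Fin (k + 1) × Fin (k + 1)).1 : ℕ) < (a : ℕ) then
          ((v : Fin (k + 1) × Fin (k + 1)).1 : ℕ)
        else ((v : Fin (k + 1) × Fin (k + 1)).1 : ℕ) - 1), ?_, ?_, ?_⟩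
    · intro v
      dsimp only
      have h2 : ((v : Fin (k + 1) × Fin (k + 1)).2 : ℕ) < k + 1 :=
        (v : Fin (k + 1) × Fin (k + 1)).2.isLt
      have h1 : ((v : Fin (k + 1) × Fin (k + 1)).1 : ℕ) < k + 1 :=
        (v : Fin (k + 1) × Fin (k + 1)).1.isLt
      have hbb : (b : ℕ) < k + 1 := b.isLt
      have haa : (a : ℕ) < k + 1 := a.isLt
      split_ifs with hva hsq hsq
      · omega
      · have := hne_b v hva
        omega
      · omega
      · have hvne : ((v : Fin (k + 1) × Fin (k + 1)).1 : ℕ) ≠ (a : ℕ) :=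
          fun h => hva (Fin.val_injective h)
        omega
    · intro u v huv hu hv
      dsimp only at hu hv ⊢
      -- both in copy a
      have hu1 : (u : Fin (k + 1) × Fin (k + 1)).1 = a := by
        by_contra h
        simp only [h, if_false] at hu
        omega
      have hv1 : (v : Fin (k + 1) × Fin (k + 1)).1 = a := by
        by_contra h
        simp only [h, if_false] at hv
        omega
      have hcne : (u : Fin (k + 1) × Fin (k + 1)) ≠ (v : Fin (k + 1) × Fin (k + 1)) :=
        fun h => huv (Subtype.ext h)
      have h2ne : ((u : Fin (k + 1) × Fin (k + 1)).2 : ℕ) ≠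
          ((v : Fin (k + 1) × Fin (k + 1)).2 : ℕ) := by
        intro h
        apply hcne
        exact Prod.ext (hu1.trans hv1.symm) (Fin.val_injective h)
      have hub := hne_b u hu1
      have hvb := hne_b v hv1
      constructor
      · intro _
        simp only [hu1, hv1, if_true]
        split_ifs <;> omega
      · intro _
        show (mK (k + 1) (k + 1)).Adj u v
        exact mK_adj.2 ⟨hcne, hu1.trans hv1.symm⟩
    · intro u v huv hu hv
      dsimp only at hu hv ⊢
      have hu1 : (u : Fin (k + 1) × Fin (k + 1)).1 ≠ a := by
        intro h
        simp only [h, if_true] at hu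
        have hub := hne_b u h
        have h2 : ((u : Fin (k + 1) × Fin (k + 1)).2 : ℕ) < k + 1 :=
          (u : Fin (k + 1) × Fin (k + 1)).2.isLt
        have hbb : (b : ℕ) < k + 1 := b.isLt
        split_ifs at hu <;> omega
      have hv1 : (v : Fin (k + 1) × Fin (k + 1)).1 ≠ a := by
        intro h
        simp only [h, if_true] at hv
        have hvb := hne_b v h
        have h2 : ((v : Fin (k + 1) × Fin (k + 1)).2 : ℕ) < k + 1 :=
          (v : Fin (k + 1) × Fin (k + 1)).2.isLt
        have hbb : (b : ℕ) < k + 1 := b.isLt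
        split_ifs at hv <;> omega
      have hcne : (u : Fin (k + 1) × Fin (k + 1)) ≠ (v : Fin (k + 1) × Fin (k + 1)) :=
        fun h => huv (Subtype.ext h)
      have hu1' : ((u : Fin (k + 1) × Fin (k + 1)).1 : ℕ) ≠ (a : ℕ) :=
        fun h => hu1 (Fin.val_injective h)
      have hv1' : ((v : Fin (k + 1) × Fin (k + 1)).1 : ℕ) ≠ (a : ℕ) :=
        fun h => hv1 (Fin.val_injective h)
      have hadj : (mK (k + 1) (k + 1)).Adj u v ↔
          (u : Fin (k + 1) × Fin (k + 1)).1 = (v : Fin (k + 1) × Fin (k + 1)).1 := by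
        rw [mK_adj]
        exact ⟨fun h => h.2, fun h => ⟨hcne, h⟩⟩
      show (mK (k + 1) (k + 1)).Adj u v ↔ _
      rw [hadj]
      simp only [hu1, hv1, if_false]
      rw [Fin.ext_iff]
      constructor
      · intro h
        rw [h]
      · intro h
        split_ifs at h <;> omega
  · simp [pow_two]
end

section
/- For every integer k ≥ 2, the graph complement((k+1)K_2) + (k−1)K_1, the disjoint union of the complement of k+1 disjoint copies of K_2 (i.e., the cocktail party graph on 2(k+1) vertices) and k−1 isolated vertices, is a cograph and a minimal k-polar obstruction. -/
abbrev GG (k : ℕ) := (mK (k + 1) 2)ᶜ ⊕g (⊥ : SimpleGraph (Fin (k - 1)))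

lemma adj_ll {k : ℕ} (a b : Fin (k+1) × Fin 2) :
    (GG k).Adj (Sum.inl a) (Sum.inl b) ↔ a.1 ≠ b.1 := by
  simp only [GG, mK, SimpleGraph.sum_adj, SimpleGraph.compl_adj, SimpleGraph.fromRel_adj,
    ne_eq, not_and, not_or]
  constructor
  · rintro ⟨hne, h⟩ e; exact (h hne).1 e
  · intro h; exact ⟨fun e => h (by rw [e]), fun _ => ⟨h, fun e => h e.symm⟩⟩

lemma adj_lr {k : ℕ} (a : Fin (k+1) × Fin 2) (b : Fin (k-1)) :
    ¬ (GG k).Adj (Sum.inl a) (Sum.inr b) := by simp [GG]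

lemma adj_rl {k : ℕ} (a : Fin (k+1) × Fin 2) (b : Fin (k-1)) :
    ¬ (GG k).Adj (Sum.inr b) (Sum.inl a) := by simp [GG]

lemma adj_rr {k : ℕ} (a b : Fin (k-1)) :
    ¬ (GG k).Adj (Sum.inr a) (Sum.inr b) := by simp [GG]

lemma cadj {k : ℕ} (a b : Fin (k+1) × Fin 2) :
    ((mK (k+1) 2))ᶜ.Adj a b ↔ a.1 ≠ b.1 := adj_ll a b

lemma cograph (k : ℕ) : IsCograph (GG k) := by
  rintro ⟨a, b, c, d, hab, hac, had, hbc, hbd, hcd, Aab, Abc, Acd, nac, nad, nbd⟩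
  rcases a with a | a <;> rcases b with b | b <;> rcases c with c | c <;> rcases d with d | d <;>
    simp only [GG, SimpleGraph.sum_adj, SimpleGraph.bot_adj] at Aab Abc Acd nac nad nbd
  rw [cadj] at Aab Abc Acd nac nad nbd
  push_neg at nac nad nbd
  exact Aab (nad.trans nbd.symm)

lemma inl_pair_ne {k : ℕ} {i i' : Fin (k+1)} (h : i ≠ i') (a b : Fin 2) :
    (Sum.inl (i, a) : (Fin (k+1) × Fin 2) ⊕ Fin (k-1)) ≠ Sum.inl (i', b) := by
  intro he
  exact h (congrArg Prod.fst (Sum.inl.inj he))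

lemma inl_pair_ne' {k : ℕ} {a b : Fin 2} (h : a ≠ b) (i : Fin (k+1)) :
    (Sum.inl (i, a) : (Fin (k+1) × Fin 2) ⊕ Fin (k-1)) ≠ Sum.inl (i, b) := by
  intro he
  exact h (congrArg Prod.snd (Sum.inl.inj he))

lemma notpolar {k : ℕ} (hk : 2 ≤ k) : ¬ IsSKPolar (GG k) k k := by
  rintro ⟨f, hlt, hA, hB⟩
  by_cases hiso : ∃ j : Fin (k-1), f (Sum.inr j) < k
  · obtain ⟨j, hj⟩ := hiso
    have badU : ∀ i i' : Fin (k+1), i ≠ i' → (∃ a, f (Sum.inl (i,a)) < k) →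
        (∃ a, f (Sum.inl (i',a)) < k) → False := by
      rintro i i' hne ⟨a, ha⟩ ⟨b, hb⟩
      have aux : ∀ x : Fin (k+1) × Fin 2, f (Sum.inl x) < k →
          f (Sum.inl x) = f (Sum.inr j) := by
        intro x hx
        by_contra hne'
        exact adj_lr x j ((hA _ _ (by simp) hx hj).mpr hne')
      have h1 := aux _ ha
      have h2 := aux _ hb
      exact ((hA _ _ (inl_pair_ne hne a b) ha hb).mp ((adj_ll _ _).mpr hne))
        (h1.trans h2.symm)
    have key : ∀ i1 i2 : Fin (k+1), i1 ≠ i2 → ¬(∃ a, f (Sum.inl (i1,a)) < k) →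
        ¬(∃ a, f (Sum.inl (i2,a)) < k) → False := by
      intro i1 i2 h12 g1 g2
      push_neg at g1 g2
      have e1 : f (Sum.inl (i1,0)) ≠ f (Sum.inl (i1,1)) := by
        intro h
        have := (hB _ _ (inl_pair_ne' (by decide) i1) (g1 0) (g1 1)).mpr h
        rw [adj_ll] at this; exact this rfl
      have e2 : f (Sum.inl (i1,0)) = f (Sum.inl (i2,0)) :=
        (hB _ _ (inl_pair_ne h12 0 0) (g1 0) (g2 0)).mp ((adj_ll _ _).mpr h12)
      have e3 : f (Sum.inl (i1,1)) = f (Sum.inl (i2,0)) :=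
        (hB _ _ (inl_pair_ne h12 1 0) (g1 1) (g2 0)).mp ((adj_ll _ _).mpr h12)
      exact e1 (e2.trans e3.symm)
    have h01 : (⟨0, by omega⟩ : Fin (k+1)) ≠ ⟨1, by omega⟩ := by simp [Fin.ext_iff]
    have h02 : (⟨0, by omega⟩ : Fin (k+1)) ≠ ⟨2, by omega⟩ := by simp [Fin.ext_iff]
    have h12 : (⟨1, by omega⟩ : Fin (k+1)) ≠ ⟨2, by omega⟩ := by simp [Fin.ext_iff]
    by_cases p0 : ∃ a, f (Sum.inl ((⟨0, by omega⟩ : Fin (k+1)), a)) < k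
    · by_cases p1 : ∃ a, f (Sum.inl ((⟨1, by omega⟩ : Fin (k+1)), a)) < k
      · exact badU _ _ h01 p0 p1
      · by_cases p2 : ∃ a, f (Sum.inl ((⟨2, by omega⟩ : Fin (k+1)), a)) < k
        · exact badU _ _ h02 p0 p2
        · exact key _ _ h12 p1 p2
    · by_cases p1 : ∃ a, f (Sum.inl ((⟨1, by omega⟩ : Fin (k+1)), a)) < k
      · by_cases p2 : ∃ a, f (Sum.inl ((⟨2, by omega⟩ : Fin (k+1)), a)) < k
        · exact badU _ _ h12 p1 p2
        · exact key _ _ h02 p0 p2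
      · exact key _ _ h01 p0 p1
  · push_neg at hiso
    by_cases hall : ∀ i : Fin (k+1), ∃ a, f (Sum.inl (i,a)) < k
    · choose σ hσ using hall
      obtain ⟨i, i', hne, heq⟩ := Fintype.exists_ne_map_eq_of_card_lt
        (fun i : Fin (k+1) => (⟨f (Sum.inl (i, σ i)), hσ i⟩ : Fin k)) (by simp)
      have hfe : f (Sum.inl (i, σ i)) = f (Sum.inl (i', σ i')) := congrArg Fin.val heq
      exact ((hA _ _ (inl_pair_ne hne _ _) (hσ i) (hσ i')).mp ((adj_ll _ _).mpr hne)) hfe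
    · push_neg at hall
      obtain ⟨i0, hi0⟩ := hall
      have hcard : Fintype.card (Fin k) < Fintype.card (Fin (k-1) ⊕ Fin 2) := by
        simp; omega
      obtain ⟨x, y, hxy, hFeq⟩ := Fintype.exists_ne_map_eq_of_card_lt
        (fun x : Fin (k-1) ⊕ Fin 2 => match x with
          | Sum.inl j => (⟨f (Sum.inr j) - k, by have := hlt (Sum.inr j); have := hiso j; omega⟩ : Fin k)
          | Sum.inr a => (⟨f (Sum.inl (i0,a)) - k, by have := hlt (Sum.inl (i0,a)); have := hi0 a; omega⟩ : Fin k)) hcard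
      match x, y with
      | Sum.inl j, Sum.inl j' =>
        have hjj : j ≠ j' := fun h => hxy (by rw [h])
        have hval : f (Sum.inr j) - k = f (Sum.inr j') - k := congrArg Fin.val hFeq
        have hfe : f (Sum.inr j) = f (Sum.inr j') := by
          have := hiso j; have := hiso j'; omega
        exact adj_rr j j' ((hB _ _ (fun h => hjj (Sum.inr.inj h)) (hiso j) (hiso j')).mpr hfe)
      | Sum.inl j, Sum.inr a =>
        have hval : f (Sum.inr j) - k = f (Sum.inl (i0,a)) - k := congrArg Fin.val hFeq
        have hfe : f (Sum.inr j) = f (Sum.inl (i0,a)) := by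
          have := hiso j; have := hi0 a; omega
        exact adj_rl (i0,a) j ((hB _ _ (by simp) (hiso j) (hi0 a)).mpr hfe)
      | Sum.inr a, Sum.inl j =>
        have hval : f (Sum.inl (i0,a)) - k = f (Sum.inr j) - k := congrArg Fin.val hFeq
        have hfe : f (Sum.inl (i0,a)) = f (Sum.inr j) := by
          have := hiso j; have := hi0 a; omega
        exact adj_lr (i0,a) j ((hB _ _ (by simp) (hi0 a) (hiso j)).mpr hfe)
      | Sum.inr a, Sum.inr b =>
        have hab : a ≠ b := fun h => hxy (by rw [h])
        have hval : f (Sum.inl (i0,a)) - k = f (Sum.inl (i0,b)) - k := congrArg Fin.val hFeq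
        have hfe : f (Sum.inl (i0,a)) = f (Sum.inl (i0,b)) := by
          have := hi0 a; have := hi0 b; omega
        have := (hB _ _ (inl_pair_ne' hab i0) (hi0 a) (hi0 b)).mpr hfe
        rw [adj_ll] at this
        exact this rfl

lemma polar_del {k : ℕ} (hk : 2 ≤ k) (v : (Fin (k+1) × Fin 2) ⊕ Fin (k-1)) :
    ∃ f : (Fin (k+1) × Fin 2) ⊕ Fin (k-1) → ℕ,
      (∀ u, u ≠ v → f u < k + k) ∧
      (∀ u w, u ≠ v → w ≠ v → u ≠ w → f u < k → f w < k →
        ((GG k).Adj u w ↔ f u ≠ f w)) ∧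
      (∀ u w, u ≠ v → w ≠ v → u ≠ w → k ≤ f u → k ≤ f w →
        ((GG k).Adj u w ↔ f u = f w)) := by
  rcases v with ⟨i0, a0⟩ | j0
  · -- deleted vertex is a CP vertex
    refine ⟨Sum.elim
      (fun p => if p.1.val = i0.val then k
        else if p.1.val < i0.val then p.1.val else p.1.val - 1)
      (fun j => k + 1 + j.val), ?_, ?_, ?_⟩
    · rintro (⟨i, a⟩ | j) _
      · have := i.isLt; have := i0.isLt
        simp only [Sum.elim_inl]
        split_ifs <;> omega
      · have := j.isLt
        simp only [Sum.elim_inr]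
        omega
    · rintro (⟨i, a⟩ | j) (⟨i', b⟩ | j') hu hw huw hfu hfw
      · simp only [Sum.elim_inl] at hfu hfw ⊢
        rw [adj_ll]
        have hi := i.isLt; have hi' := i'.isLt; have := i0.isLt
        have : ((i, a).1 ≠ (i', b).1) ↔ i.val ≠ i'.val := by
          simp [Fin.ext_iff]
        rw [this]
        split_ifs at hfu hfw ⊢ <;> omega
      · exfalso; simp only [Sum.elim_inr] at hfw; omega
      · exfalso; simp only [Sum.elim_inr] at hfu; omega
      · exfalso; simp only [Sum.elim_inr] at hfu; omega
    · rintro (⟨i, a⟩ | j) (⟨i', b⟩ | j') hu hw huw hfu hfw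
      · simp only [Sum.elim_inl] at hfu hfw ⊢
        have hli := i.isLt; have hli' := i'.isLt; have := i0.isLt
        have hi : i.val = i0.val := by split_ifs at hfu <;> omega
        have hi' : i'.val = i0.val := by split_ifs at hfw <;> omega
        exfalso
        have ha : a ≠ a0 := by
          intro h; exact hu (congrArg Sum.inl (Prod.ext (Fin.ext hi) h))
        have hb : b ≠ a0 := by
          intro h; exact hw (congrArg Sum.inl (Prod.ext (Fin.ext hi') h))
        have hab : a ≠ b := by
          intro h
          exact huw (congrArg Sum.inl (Prod.ext (Fin.ext (show i.val = i'.val by omega)) h))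
        have h1 : a.val ≠ a0.val := fun h => ha (Fin.ext h)
        have h2 : b.val ≠ a0.val := fun h => hb (Fin.ext h)
        have h3 : a.val ≠ b.val := fun h => hab (Fin.ext h)
        have := a.isLt; have := b.isLt; have := a0.isLt
        omega
      · apply iff_of_false (adj_lr _ _)
        simp only [Sum.elim_inl, Sum.elim_inr]
        have := i.isLt; have := i0.isLt
        split_ifs <;> omega
      · apply iff_of_false (adj_rl _ _)
        simp only [Sum.elim_inl, Sum.elim_inr]
        have := i'.isLt; have := i0.isLt
        split_ifs <;> omega
      · apply iff_of_false (adj_rr _ _)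
        simp only [Sum.elim_inr]
        intro h
        exact huw (congrArg Sum.inr (Fin.ext (by omega)))
  · -- deleted vertex is an isolated vertex
    refine ⟨Sum.elim
      (fun p => if p.1.val = k then k + p.2.val else p.1.val)
      (fun j => k + 2 + (if j.val < j0.val then j.val else j.val - 1)), ?_, ?_, ?_⟩
    · rintro (⟨i, a⟩ | j) hu
      · have := i.isLt; have := a.isLt
        simp only [Sum.elim_inl]
        split_ifs <;> omega
      · have hj : j.val ≠ j0.val := fun h => hu (congrArg Sum.inr (Fin.ext h))
        have := j.isLt; have := j0.isLt
        simp only [Sum.elim_inr]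
        split_ifs <;> omega
    · rintro (⟨i, a⟩ | j) (⟨i', b⟩ | j') hu hw huw hfu hfw
      · simp only [Sum.elim_inl] at hfu hfw ⊢
        rw [adj_ll]
        have := i.isLt; have := i'.isLt; have := a.isLt; have := b.isLt
        have : ((i, a).1 ≠ (i', b).1) ↔ i.val ≠ i'.val := by
          simp [Fin.ext_iff]
        rw [this]
        split_ifs at hfu hfw ⊢ <;> omega
      · exfalso; simp only [Sum.elim_inr] at hfw; omega
      · exfalso; simp only [Sum.elim_inr] at hfu; omega
      · exfalso; simp only [Sum.elim_inr] at hfu; omega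
    · rintro (⟨i, a⟩ | j) (⟨i', b⟩ | j') hu hw huw hfu hfw
      · simp only [Sum.elim_inl] at hfu hfw ⊢
        have := i.isLt; have := i'.isLt; have := a.isLt; have := b.isLt
        have hi : i.val = k := by split_ifs at hfu <;> omega
        have hi' : i'.val = k := by split_ifs at hfw <;> omega
        apply iff_of_false
        · intro h
          rw [adj_ll] at h
          exact h (Fin.ext (show i.val = i'.val by omega))
        · rw [if_pos hi, if_pos hi']
          intro heq
          exact huw (congrArg Sum.inl (Prod.ext (Fin.ext (show i.val = i'.val by omega)) (Fin.ext (show a.val = b.val by omega))))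
      · apply iff_of_false (adj_lr _ _)
        simp only [Sum.elim_inl, Sum.elim_inr]
        have := a.isLt
        split_ifs <;> omega
      · apply iff_of_false (adj_rl _ _)
        simp only [Sum.elim_inl, Sum.elim_inr]
        have := b.isLt
        split_ifs <;> omega
      · have hj : j.val ≠ j0.val := fun h => hu (congrArg Sum.inr (Fin.ext h))
        have hj' : j'.val ≠ j0.val := fun h => hw (congrArg Sum.inr (Fin.ext h))
        apply iff_of_false (adj_rr _ _)
        simp only [Sum.elim_inr]
        intro heq
        apply huw
        apply congrArg Sum.inr
        apply Fin.ext
        split_ifs at heq <;> omega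

/-- For every `k ≥ 2`, the graph `complement((k+1)K₂) + (k-1)K₁` is a cograph and a
minimal `k`-polar obstruction. -/
theorem cocktail_plus_isolated_is_minimal_obstruction {k : ℕ} (hk : 2 ≤ k) :
    IsCograph ((mK (k + 1) 2)ᶜ ⊕g (⊥ : SimpleGraph (Fin (k - 1)))) ∧
      IsMinimalPolarObstruction ((mK (k + 1) 2)ᶜ ⊕g (⊥ : SimpleGraph (Fin (k - 1)))) k k := by
  refine ⟨cograph k, notpolar hk, ?_⟩
  intro S hS
  obtain ⟨v, hv⟩ := (Set.ne_univ_iff_exists_notMem S).mp hS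
  obtain ⟨f, h1, h2, h3⟩ := polar_del hk v
  refine ⟨fun x => f x.val, fun x => h1 x.val (fun h => hv (h ▸ x.2)), ?_, ?_⟩
  · intro u w huw hfu hfw
    have hu : (u : (Fin (k+1) × Fin 2) ⊕ Fin (k-1)) ≠ v := fun h => hv (h ▸ u.2)
    have hw : (w : (Fin (k+1) × Fin 2) ⊕ Fin (k-1)) ≠ v := fun h => hv (h ▸ w.2)
    have huw' : (u : (Fin (k+1) × Fin 2) ⊕ Fin (k-1)) ≠ (w : (Fin (k+1) × Fin 2) ⊕ Fin (k-1)) :=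
      fun h => huw (Subtype.ext h)
    have := h2 u.val w.val hu hw huw' hfu hfw
    simpa using this
  · intro u w huw hfu hfw
    have hu : (u : (Fin (k+1) × Fin 2) ⊕ Fin (k-1)) ≠ v := fun h => hv (h ▸ u.2)
    have hw : (w : (Fin (k+1) × Fin 2) ⊕ Fin (k-1)) ≠ v := fun h => hv (h ▸ w.2)
    have huw' : (u : (Fin (k+1) × Fin 2) ⊕ Fin (k-1)) ≠ (w : (Fin (k+1) × Fin 2) ⊕ Fin (k-1)) :=
      fun h => huw (Subtype.ext h)
    have := h3 u.val w.val hu hw huw' hfu hfw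
    simpa using this
end
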